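/- arXiv:1508.07902 — 4 statements merged into one kernel-verified Lean document; each statement's English description precedes it below -/
import Mathlib

section
/- Fix a test labeling y ∈ X and let Λ be the local polytope. Let p ∈ P^{2,y} be defined by sets Y_v ⊆ X_v \ {y_v} and let ḡ be the reduced cost vector for p. Let q ∈ S_f ∩ P^{2,y} with q ≤ p and Q = [q]. Let Λ' ⊆ Λ be a nonempty compact set with Q(Λ') ⊆ Λ', let O* = argmin_{μ∈Λ'} ⟨ḡ, μ⟩ and O*_v = {i ∈ X_v : μ_v(i) > 0 for some μ ∈ O*}. Then q_v(O*_v) = O*_v for every v ∈ V. -/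
open Finset

noncomputable section

variable {V : Type*} [Fintype V] [DecidableEq V]
variable {X : V → Type*} [∀ v, Fintype (X v)] [∀ v, DecidableEq (X v)]
variable {E : Finset (V × V)}

/-- The index set `I`: the constant component `∅`, unary components `(u, i)` and
pairwise components `(uv, ij)` for edges `uv ∈ E`. -/
abbrev GIdx (X : V → Type*) (E : Finset (V × V)) : Type _ :=
  Unit ⊕ (Σ v : V, X v) ⊕ (Σ e : {e : V × V // e ∈ E}, X e.1.1 × X e.1.2)

/-- Vectors in `ℝ^I` (cost vectors and relaxed labelings live in the same space). -/
abbrev GVec (X : V → Type*) (E : Finset (V × V)) : Type _ := GIdx X E → ℝ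

/-- Index of the constant component. -/
def cIdx : GIdx X E := Sum.inl ()

/-- Index of the unary component `(v, i)`. -/
def uIdx (v : V) (i : X v) : GIdx X E := Sum.inr (Sum.inl ⟨v, i⟩)

/-- Index of the pairwise component `(uv, ij)` of the edge `e = uv ∈ E`. -/
def pIdx (e : {e : V × V // e ∈ E}) (i : X e.1.1) (j : X e.1.2) : GIdx X E :=
  Sum.inr (Sum.inr ⟨e, (i, j)⟩)

/-- The energy `E_f(x) = f_∅ + Σ_v f_v(x_v) + Σ_{uv∈E} f_{uv}(x_u,x_v)`. -/
def energy (f : GVec X E) (x : ∀ v, X v) : ℝ :=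
  f cIdx + ∑ v : V, f (uIdx v (x v)) +
    ∑ e : {e : V × V // e ∈ E}, f (pIdx e (x e.1.1) (x e.1.2))

/-- The standard inner product on `ℝ^I`. -/
def dotp (f μ : GVec X E) : ℝ := ∑ idx : GIdx X E, f idx * μ idx

/-- The lifting (overcomplete representation) `δ : X → ℝ^I`. -/
def lift (x : ∀ v, X v) : GVec X E := fun idx =>
  match idx with
  | Sum.inl _ => 1
  | Sum.inr (Sum.inl ⟨v, i⟩) => if x v = i then 1 else 0
  | Sum.inr (Sum.inr ⟨e, (i, j)⟩) => if x e.1.1 = i ∧ x e.1.2 = j then 1 else 0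

/-- Application of a node-wise substitution to a labeling: `p(x)_v = p_v(x_v)`. -/
def applySub (p : ∀ v, X v → X v) (x : ∀ v, X v) : ∀ v, X v := fun v => p v (x v)

/-- All the component maps `p_v` are idempotent. -/
def NodewiseIdem (p : ∀ v, X v → X v) : Prop := ∀ (v : V) (i : X v), p v (p v i) = p v i

/-- `p` is strictly improving for the cost vector `f`:
`E_f(p(x)) < E_f(x)` whenever `p(x) ≠ x`. -/
def StrictlyImproving (f : GVec X E) (p : ∀ v, X v → X v) : Prop :=
  ∀ x : ∀ v, X v, applySub p x ≠ x → energy f (applySub p x) < energy f x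

/-- The adjoint `[p]ᵀ` of the linear extension of a node-wise substitution `p`,
acting on cost vectors: `([p]ᵀ f)_∅ = f_∅`, `([p]ᵀ f)_u(i) = f_u(p_u(i))`,
`([p]ᵀ f)_{uv}(i,j) = f_{uv}(p_u(i), p_v(j))`. -/
def Padj (p : ∀ v, X v → X v) (f : GVec X E) : GVec X E := fun idx =>
  match idx with
  | Sum.inl _ => f cIdx
  | Sum.inr (Sum.inl ⟨v, i⟩) => f (uIdx v (p v i))
  | Sum.inr (Sum.inr ⟨e, (i, j)⟩) => f (pIdx e (p e.1.1 i) (p e.1.2 j))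

/-- The linear extension `[p] : ℝ^I → ℝ^I` of a node-wise substitution `p`
(the adjoint of `Padj p` with respect to `dotp`): it satisfies `δ(p(x)) = [p] δ(x)`. -/
def Pmap (p : ∀ v, X v → X v) (μ : GVec X E) : GVec X E := fun idx =>
  match idx with
  | Sum.inl _ => μ cIdx
  | Sum.inr (Sum.inl ⟨v, i⟩) => ∑ i' : X v, if p v i' = i then μ (uIdx v i') else 0
  | Sum.inr (Sum.inr ⟨e, (i, j)⟩) =>
      ∑ i' : X e.1.1, ∑ j' : X e.1.2,
        if p e.1.1 i' = i ∧ p e.1.2 j' = j then μ (pIdx e i' j') else 0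

/-- `p` is strictly `Λ`-improving for `f` (`p ∈ S_f`):
`min_{μ∈Λ} ⟨f − [p]ᵀf, μ⟩ = 0` and every minimizer `μ` satisfies `[p]μ = μ`. -/
def StrictlyLambdaImproving (Λ : Set (GVec X E)) (f : GVec X E)
    (p : ∀ v, X v → X v) : Prop :=
  IsLeast {r : ℝ | ∃ μ ∈ Λ, dotp (f - Padj p f) μ = r} 0 ∧
    ∀ μ ∈ Λ, dotp (f - Padj p f) μ = 0 → Pmap p μ = μ

/-- The subset-to-one substitution determined by a test labeling `y` and
sets `Y_v` of labels replaced by `y_v`. -/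
def subToOne (y : ∀ v, X v) (Y : ∀ v, Finset (X v)) : ∀ v, X v → X v :=
  fun v i => if i ∈ Y v then y v else i

/-- Membership in the class `P^{2,y}` of subset-to-one substitutions. -/
def InPtwo (y : ∀ v, X v) (p : ∀ v, X v → X v) : Prop :=
  ∃ Y : ∀ v, Finset (X v), (∀ v, y v ∉ Y v) ∧
    ∀ (v : V) (i : X v), p v i = if i ∈ Y v then y v else i

/-- The local polytope `Λ`. -/
def localPolytope (X : V → Type*) [∀ v, Fintype (X v)] (E : Finset (V × V)) :
    Set (GVec X E) :=
  { μ | (∀ idx, 0 ≤ μ idx) ∧ μ cIdx = 1 ∧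
      (∀ u : V, ∑ i : X u, μ (uIdx u i) = μ cIdx) ∧
      (∀ (e : {e : V × V // e ∈ E}) (i : X e.1.1),
        ∑ j : X e.1.2, μ (pIdx e i j) = μ (uIdx e.1.1 i)) ∧
      (∀ (e : {e : V × V // e ∈ E}) (j : X e.1.2),
        ∑ i : X e.1.1, μ (pIdx e i j) = μ (uIdx e.1.2 j)) }

/-- A dual vector `φ`: for each edge `uv ∈ E` messages `φ_{uv} : X_u → ℝ` (to the tail)
and `φ_{vu} : X_v → ℝ` (to the head), and a number `φ_u` for every node. -/
structure GDual (X : V → Type*) (E : Finset (V × V)) where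
  fwd : ∀ e : {e : V × V // e ∈ E}, X e.1.1 → ℝ
  bwd : ∀ e : {e : V × V // e ∈ E}, X e.1.2 → ℝ
  nd : V → ℝ

/-- Reparametrized unary cost `g^φ_u(i) = g_u(i) + Σ_{v∈nb(u)} φ_{uv}(i) − φ_u`. -/
def repUn (g : GVec X E) (φ : GDual X E) (u : V) (i : X u) : ℝ :=
  g (uIdx u i) +
    (∑ e : {e : V × V // e ∈ E},
      ((if h : e.1.1 = u then φ.fwd e (cast (congrArg X h.symm) i) else 0) +
        (if h : e.1.2 = u then φ.bwd e (cast (congrArg X h.symm) i) else 0))) -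
    φ.nd u

/-- Reparametrized pairwise cost `g^φ_{uv}(i,j) = g_{uv}(i,j) − φ_{uv}(i) − φ_{vu}(j)`. -/
def repPw (g : GVec X E) (φ : GDual X E) (e : {e : V × V // e ∈ E})
    (i : X e.1.1) (j : X e.1.2) : ℝ :=
  g (pIdx e i j) - φ.fwd e i - φ.bwd e j

/-- Reparametrized constant `g^φ_∅ = g_∅ + Σ_u φ_u` (the dual lower bound). -/
def repC (g : GVec X E) (φ : GDual X E) : ℝ := g cIdx + ∑ u : V, φ.nd u

/-- Dual feasibility: `g^φ ≥ 0` componentwise. -/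
def DualFeasible (g : GVec X E) (φ : GDual X E) : Prop :=
  (∀ (u : V) (i : X u), 0 ≤ repUn g φ u i) ∧
    ∀ (e : {e : V × V // e ∈ E}) (i : X e.1.1) (j : X e.1.2), 0 ≤ repPw g φ e i j

/-- Arc consistency of the reparametrized cost `g^φ`. -/
def ArcConsistent (g : GVec X E) (φ : GDual X E) : Prop :=
  (∀ (e : {e : V × V // e ∈ E}) (i : X e.1.1) (j : X e.1.2),
      repPw g φ e i j = 0 → repUn g φ e.1.1 i = 0 ∧ repUn g φ e.1.2 j = 0) ∧
  (∀ (e : {e : V × V // e ∈ E}) (i : X e.1.1),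
      repUn g φ e.1.1 i = 0 → ∃ j : X e.1.2, repPw g φ e i j = 0) ∧
  (∀ (e : {e : V × V // e ∈ E}) (j : X e.1.2),
      repUn g φ e.1.2 j = 0 → ∃ i : X e.1.1, repPw g φ e i j = 0)

/-- The reduced cost vector `ḡ` associated with the subset-to-one substitution `p ∈ P^{2,y}`
given by the sets `Y_v` (where `g = f − [p]ᵀ f`). -/
def reduced (f : GVec X E) (y : ∀ v, X v) (Y : ∀ v, Finset (X v)) : GVec X E :=
  fun idx =>
    match idx with
    | Sum.inl _ => 0
    | Sum.inr (Sum.inl ⟨v, i⟩) => (f - Padj (subToOne y Y) f) (uIdx v i)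
    | Sum.inr (Sum.inr ⟨e, (i, j)⟩) =>
        let g : GVec X E := f - Padj (subToOne y Y) f
        let dvu : ℝ := sInf ((fun i' => g (pIdx e i' j)) '' {i' : X e.1.1 | i' ∉ Y e.1.1})
        let duv : ℝ := sInf ((fun j' => g (pIdx e i j')) '' {j' : X e.1.2 | j' ∉ Y e.1.2})
        if i ∈ Y e.1.1 then
          if j ∈ Y e.1.2 then min (dvu + duv) (g (pIdx e i j)) else duv
        else if j ∈ Y e.1.2 then dvu else 0

/-! ### Auxiliary development -/

section Aux

attribute [local instance] Classical.propDecidable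

variable (f : GVec X E) (y : ∀ v, X v) (Y Z : ∀ v, Finset (X v))

lemma aux_sInf_le {γ : Type*} [Fintype γ] (S : Finset γ) (F : γ → ℝ) {a : γ}
    (ha : a ∉ S) : sInf (F '' {x | x ∉ S}) ≤ F a :=
  csInf_le (Set.Finite.bddBelow (Set.toFinite _)) ⟨a, ha, rfl⟩

lemma aux_le_sInf {γ : Type*} [Fintype γ] (S : Finset γ) (F : γ → ℝ) {c : ℝ}
    (hne : ∃ a, a ∉ S) (h : ∀ a ∉ S, c ≤ F a) : c ≤ sInf (F '' {x | x ∉ S}) := by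
  obtain ⟨a, ha⟩ := hne
  refine le_csInf ⟨F a, a, ha, rfl⟩ ?_
  rintro r ⟨b, hb, rfl⟩
  exact h b hb

lemma subToOne_mem {v : V} {i : X v} (hi : i ∈ Z v) : subToOne y Z v i = y v :=
  if_pos hi

lemma subToOne_nmem {v : V} {i : X v} (hi : i ∉ Z v) : subToOne y Z v i = i :=
  if_neg hi

lemma subToOne_out (hZ : ∀ v, y v ∉ Z v) (v : V) (i : X v) :
    subToOne y Z v i ∉ Z v := by
  by_cases hi : i ∈ Z v
  · rw [subToOne_mem y Z hi]; exact hZ v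
  · rwa [subToOne_nmem y Z hi]

/-- `g = f - [p]ᵀ f` for `p = subToOne y Z`. -/
def gvec : GVec X E := f - Padj (subToOne y Z) f

lemma gvec_c : gvec f y Z cIdx = 0 := sub_self (f cIdx)

lemma gvec_un (v : V) (i : X v) :
    gvec f y Z (uIdx v i) = f (uIdx v i) - f (uIdx v (subToOne y Z v i)) := rfl

lemma gvec_pw (e : {e : V × V // e ∈ E}) (i : X e.1.1) (j : X e.1.2) :
    gvec f y Z (pIdx e i j) =
      f (pIdx e i j) - f (pIdx e (subToOne y Z e.1.1 i) (subToOne y Z e.1.2 j)) := rfl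

lemma gvec_un_nmem {v : V} {i : X v} (hi : i ∉ Z v) : gvec f y Z (uIdx v i) = 0 := by
  rw [gvec_un, subToOne_nmem y Z hi, sub_self]

lemma gvec_pw_nmem {e : {e : V × V // e ∈ E}} {i : X e.1.1} {j : X e.1.2}
    (hi : i ∉ Z e.1.1) (hj : j ∉ Z e.1.2) : gvec f y Z (pIdx e i j) = 0 := by
  rw [gvec_pw, subToOne_nmem y Z hi, subToOne_nmem y Z hj, sub_self]

/-- `Δ_{uv}(i)` : min over `j' ∉ Z v` of `g(i, j')`. -/
def duv (e : {e : V × V // e ∈ E}) (i : X e.1.1) : ℝ :=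
  sInf ((fun j' => gvec f y Z (pIdx e i j')) '' {j' : X e.1.2 | j' ∉ Z e.1.2})

/-- `Δ_{vu}(j)` : min over `i' ∉ Z u` of `g(i', j)`. -/
def dvu (e : {e : V × V // e ∈ E}) (j : X e.1.2) : ℝ :=
  sInf ((fun i' => gvec f y Z (pIdx e i' j)) '' {i' : X e.1.1 | i' ∉ Z e.1.1})

lemma reduced_c : reduced f y Z cIdx = 0 := rfl

lemma reduced_un (v : V) (i : X v) :
    reduced f y Z (uIdx v i) = gvec f y Z (uIdx v i) := rfl

lemma reduced_pw (e : {e : V × V // e ∈ E}) (i : X e.1.1) (j : X e.1.2) :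
    reduced f y Z (pIdx e i j) =
      if i ∈ Z e.1.1 then
        if j ∈ Z e.1.2 then
          min (dvu f y Z e j + duv f y Z e i) (gvec f y Z (pIdx e i j))
        else duv f y Z e i
      else if j ∈ Z e.1.2 then dvu f y Z e j else 0 := rfl

end Aux

section Pointwise

set_option linter.unusedSectionVars false

variable (f : GVec X E) (y : ∀ v, X v) (Y Z : ∀ v, Finset (X v))

lemma duv_le {e : {e : V × V // e ∈ E}} (i : X e.1.1) {j : X e.1.2}
    (hj : j ∉ Z e.1.2) : duv f y Z e i ≤ gvec f y Z (pIdx e i j) := by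
  unfold duv; exact aux_sInf_le _ _ hj

lemma dvu_le {e : {e : V × V // e ∈ E}} {i : X e.1.1} (j : X e.1.2)
    (hi : i ∉ Z e.1.1) : dvu f y Z e j ≤ gvec f y Z (pIdx e i j) := by
  unfold dvu; exact aux_sInf_le _ _ hi

lemma duv_mono (hY : ∀ v, y v ∉ Y v) (hZY : ∀ v, Z v ⊆ Y v) {e : {e : V × V // e ∈ E}} {i : X e.1.1} (hi : i ∈ Z e.1.1) :
    duv f y Z e i ≤ duv f y Y e i := by
  refine aux_le_sInf (Y e.1.2) _ ⟨y e.1.2, hY e.1.2⟩ ?_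
  intro j' hj'Y
  have hj'Z : j' ∉ Z e.1.2 := fun h => hj'Y (hZY _ h)
  have heq : gvec f y Y (pIdx e i j') = gvec f y Z (pIdx e i j') := by
    rw [gvec_pw, gvec_pw, subToOne_mem y Z hi, subToOne_mem y Y (hZY _ hi),
      subToOne_nmem y Z hj'Z, subToOne_nmem y Y hj'Y]
  calc duv f y Z e i ≤ gvec f y Z (pIdx e i j') := duv_le f y Z i hj'Z
    _ = _ := heq.symm

lemma dvu_mono (hY : ∀ v, y v ∉ Y v) (hZY : ∀ v, Z v ⊆ Y v) {e : {e : V × V // e ∈ E}} {j : X e.1.2} (hj : j ∈ Z e.1.2) :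
    dvu f y Z e j ≤ dvu f y Y e j := by
  refine aux_le_sInf (Y e.1.1) _ ⟨y e.1.1, hY e.1.1⟩ ?_
  intro i' hi'Y
  have hi'Z : i' ∉ Z e.1.1 := fun h => hi'Y (hZY _ h)
  have heq : gvec f y Y (pIdx e i' j) = gvec f y Z (pIdx e i' j) := by
    rw [gvec_pw, gvec_pw, subToOne_mem y Z hj, subToOne_mem y Y (hZY _ hj),
      subToOne_nmem y Z hi'Z, subToOne_nmem y Y hi'Y]
  calc dvu f y Z e j ≤ gvec f y Z (pIdx e i' j) := dvu_le f y Z j hi'Z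
    _ = _ := heq.symm

/-- Pointwise unary identity:
`ḡ^Z_v(i) = ḡ^Y_v(i) − ḡ^Y_v(q_v(i))` for `q = subToOne y Z`. -/
lemma red_un_pt (hY : ∀ v, y v ∉ Y v) (hZY : ∀ v, Z v ⊆ Y v) (v : V) (i : X v) :
    reduced f y Z (uIdx v i) =
      reduced f y Y (uIdx v i) - reduced f y Y (uIdx v (subToOne y Z v i)) := by
  rw [reduced_un, reduced_un, reduced_un, gvec_un, gvec_un, gvec_un]
  by_cases hi : i ∈ Z v
  · rw [subToOne_mem y Z hi, subToOne_mem y Y (hZY v hi), subToOne_nmem y Y (hY v)]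
    ring
  · rw [subToOne_nmem y Z hi]
    ring

/-- Pointwise pairwise inequality:
`ḡ^Z_{uv}(i,j) ≤ ḡ^Y_{uv}(i,j) − ḡ^Y_{uv}(q_u(i), q_v(j))`. -/
lemma red_pw_pt (hY : ∀ v, y v ∉ Y v) (hZY : ∀ v, Z v ⊆ Y v) (e : {e : V × V // e ∈ E}) (i : X e.1.1) (j : X e.1.2) :
    reduced f y Z (pIdx e i j) ≤
      reduced f y Y (pIdx e i j) -
        reduced f y Y (pIdx e (subToOne y Z e.1.1 i) (subToOne y Z e.1.2 j)) := by
  by_cases hiZ : i ∈ Z e.1.1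
  · have hiY : i ∈ Y e.1.1 := hZY _ hiZ
    rw [subToOne_mem y Z hiZ]
    by_cases hjZ : j ∈ Z e.1.2
    · -- (Z, Z)
      have hjY : j ∈ Y e.1.2 := hZY _ hjZ
      rw [subToOne_mem y Z hjZ, reduced_pw, reduced_pw, reduced_pw,
        if_pos hiZ, if_pos hjZ, if_pos hiY, if_pos hjY,
        if_neg (hY e.1.1), if_neg (hY e.1.2), sub_zero]
      have hgg : gvec f y Z (pIdx e i j) = gvec f y Y (pIdx e i j) := by
        rw [gvec_pw, gvec_pw, subToOne_mem y Z hiZ, subToOne_mem y Z hjZ,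
          subToOne_mem y Y hiY, subToOne_mem y Y hjY]
      exact hgg ▸ min_le_min
        (add_le_add (dvu_mono f y Y Z hY hZY hjZ) (duv_mono f y Y Z hY hZY hiZ))
        le_rfl
    · rw [subToOne_nmem y Z hjZ, reduced_pw, reduced_pw, reduced_pw,
        if_pos hiZ, if_neg hjZ, if_pos hiY, if_neg (hY e.1.1)]
      by_cases hjY : j ∈ Y e.1.2
      · -- (Z, Y\Z)
        rw [if_pos hjY, if_pos hjY, le_sub_iff_add_le]
        refine le_min ?_ ?_
        · have := duv_mono f y Y Z hY hZY (e := e) hiZ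
          linarith
        · have h1 : duv f y Z e i ≤ gvec f y Z (pIdx e i j) := duv_le f y Z i hjZ
          have h2 : dvu f y Y e j ≤ gvec f y Y (pIdx e (y e.1.1) j) :=
            dvu_le f y Y j (hY e.1.1)
          have e1 : gvec f y Z (pIdx e i j)
              = f (pIdx e i j) - f (pIdx e (y e.1.1) j) := by
            rw [gvec_pw, subToOne_mem y Z hiZ, subToOne_nmem y Z hjZ]
          have e2 : gvec f y Y (pIdx e (y e.1.1) j)
              = f (pIdx e (y e.1.1) j) - f (pIdx e (y e.1.1) (y e.1.2)) := by
            rw [gvec_pw, subToOne_nmem y Y (hY e.1.1), subToOne_mem y Y hjY]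
          have e3 : gvec f y Y (pIdx e i j)
              = f (pIdx e i j) - f (pIdx e (y e.1.1) (y e.1.2)) := by
            rw [gvec_pw, subToOne_mem y Y hiY, subToOne_mem y Y hjY]
          rw [e1] at h1; rw [e2] at h2; rw [e3]
          linarith
      · -- (Z, out)
        rw [if_neg hjY, if_neg hjY, sub_zero]
        exact duv_mono f y Y Z hY hZY hiZ
  · rw [subToOne_nmem y Z hiZ]
    by_cases hjZ : j ∈ Z e.1.2
    · have hjY : j ∈ Y e.1.2 := hZY _ hjZ
      rw [subToOne_mem y Z hjZ, reduced_pw, reduced_pw, reduced_pw,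
        if_neg hiZ, if_pos hjZ]
      by_cases hiY : i ∈ Y e.1.1
      · -- (Y\Z, Z)
        rw [if_pos hiY, if_pos hjY, if_pos hiY, if_neg (hY e.1.2), le_sub_iff_add_le]
        refine le_min ?_ ?_
        · have := dvu_mono f y Y Z hY hZY (e := e) hjZ
          linarith
        · have h1 : dvu f y Z e j ≤ gvec f y Z (pIdx e i j) := dvu_le f y Z j hiZ
          have h2 : duv f y Y e i ≤ gvec f y Y (pIdx e i (y e.1.2)) :=
            duv_le f y Y i (hY e.1.2)
          have e1 : gvec f y Z (pIdx e i j)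
              = f (pIdx e i j) - f (pIdx e i (y e.1.2)) := by
            rw [gvec_pw, subToOne_nmem y Z hiZ, subToOne_mem y Z hjZ]
          have e2 : gvec f y Y (pIdx e i (y e.1.2))
              = f (pIdx e i (y e.1.2)) - f (pIdx e (y e.1.1) (y e.1.2)) := by
            rw [gvec_pw, subToOne_mem y Y hiY, subToOne_nmem y Y (hY e.1.2)]
          have e3 : gvec f y Y (pIdx e i j)
              = f (pIdx e i j) - f (pIdx e (y e.1.1) (y e.1.2)) := by
            rw [gvec_pw, subToOne_mem y Y hiY, subToOne_mem y Y hjY]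
          rw [e1] at h1; rw [e2] at h2; rw [e3]
          linarith
      · -- (out, Z)
        rw [if_neg hiY, if_pos hjY, if_neg hiY, if_neg (hY e.1.2), sub_zero]
        exact dvu_mono f y Y Z hY hZY hjZ
    · -- (*, out) with i ∉ Z : q fixes both, and ḡ^Z = 0
      rw [subToOne_nmem y Z hjZ, reduced_pw, if_neg hiZ, if_neg hjZ, sub_self]

end Pointwise

section Dot

set_option linter.unusedSectionVars false

lemma Pmap_c (q : ∀ v, X v → X v) (μ : GVec X E) : Pmap q μ cIdx = μ cIdx := rfl

lemma Pmap_un (q : ∀ v, X v → X v) (μ : GVec X E) (v : V) (i : X v) :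
    Pmap q μ (uIdx v i) = ∑ i' : X v, if q v i' = i then μ (uIdx v i') else 0 := rfl

lemma Pmap_pw (q : ∀ v, X v → X v) (μ : GVec X E) (e : {e : V × V // e ∈ E})
    (i : X e.1.1) (j : X e.1.2) :
    Pmap q μ (pIdx e i j) = ∑ i' : X e.1.1, ∑ j' : X e.1.2,
      if q e.1.1 i' = i ∧ q e.1.2 j' = j then μ (pIdx e i' j') else 0 := rfl

lemma Padj_c (q : ∀ v, X v → X v) (g : GVec X E) : Padj q g cIdx = g cIdx := rfl

lemma Padj_un (q : ∀ v, X v → X v) (g : GVec X E) (v : V) (i : X v) :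
    Padj q g (uIdx v i) = g (uIdx v (q v i)) := rfl

lemma Padj_pw (q : ∀ v, X v → X v) (g : GVec X E) (e : {e : V × V // e ∈ E})
    (i : X e.1.1) (j : X e.1.2) :
    Padj q g (pIdx e i j) = g (pIdx e (q e.1.1 i) (q e.1.2 j)) := rfl

lemma dotp_expand (g μ : GVec X E) :
    dotp g μ = g cIdx * μ cIdx
      + (∑ v : V, ∑ i : X v, g (uIdx v i) * μ (uIdx v i))
      + ∑ e : {e : V × V // e ∈ E}, ∑ i : X e.1.1, ∑ j : X e.1.2,
          g (pIdx e i j) * μ (pIdx e i j) := by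
  rw [dotp, Fintype.sum_sum_type, Fintype.sum_sum_type, add_assoc]
  congr 1
  · simp [cIdx]
  congr 1
  · rw [← Finset.univ_sigma_univ, Finset.sum_sigma]
    rfl
  · rw [← Finset.univ_sigma_univ, Finset.sum_sigma]
    refine Finset.sum_congr rfl fun e _ => ?_
    rw [Fintype.sum_prod_type]
    rfl

/-- Adjointness of `[q]` and `[q]ᵀ` with respect to `dotp`. -/
lemma dotp_Pmap (g μ : GVec X E) (q : ∀ v, X v → X v) :
    dotp g (Pmap q μ) = dotp (Padj q g) μ := by
  rw [dotp_expand, dotp_expand]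
  have hc : g cIdx * Pmap q μ cIdx = Padj q g cIdx * μ cIdx := rfl
  have hu : ∀ v : V, ∑ i : X v, g (uIdx v i) * Pmap q μ (uIdx v i)
      = ∑ i : X v, Padj q g (uIdx v i) * μ (uIdx v i) := by
    intro v
    calc ∑ i : X v, g (uIdx v i) * Pmap q μ (uIdx v i)
        = ∑ i : X v, ∑ i' : X v,
            if q v i' = i then g (uIdx v i) * μ (uIdx v i') else 0 := by
          refine Finset.sum_congr rfl fun i _ => ?_
          rw [Pmap_un, Finset.mul_sum]
          refine Finset.sum_congr rfl fun i' _ => ?_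
          split_ifs <;> simp
      _ = ∑ i' : X v, ∑ i : X v,
            if q v i' = i then g (uIdx v i) * μ (uIdx v i') else 0 :=
          Finset.sum_comm
      _ = ∑ i' : X v, g (uIdx v (q v i')) * μ (uIdx v i') := by
          refine Finset.sum_congr rfl fun i' _ => ?_
          simp
  have hp : ∀ e : {e : V × V // e ∈ E},
      ∑ i : X e.1.1, ∑ j : X e.1.2, g (pIdx e i j) * Pmap q μ (pIdx e i j)
      = ∑ i : X e.1.1, ∑ j : X e.1.2, Padj q g (pIdx e i j) * μ (pIdx e i j) := by
    intro e
    calc ∑ i : X e.1.1, ∑ j : X e.1.2, g (pIdx e i j) * Pmap q μ (pIdx e i j)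
        = ∑ i : X e.1.1, ∑ j : X e.1.2, ∑ i' : X e.1.1, ∑ j' : X e.1.2,
            if q e.1.1 i' = i ∧ q e.1.2 j' = j then
              g (pIdx e i j) * μ (pIdx e i' j') else 0 := by
          refine Finset.sum_congr rfl fun i _ => ?_
          refine Finset.sum_congr rfl fun j _ => ?_
          rw [Pmap_pw, Finset.mul_sum]
          refine Finset.sum_congr rfl fun i' _ => ?_
          rw [Finset.mul_sum]
          refine Finset.sum_congr rfl fun j' _ => ?_
          split_ifs <;> simp
      _ = ∑ i : X e.1.1, ∑ i' : X e.1.1, ∑ j : X e.1.2, ∑ j' : X e.1.2,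
            if q e.1.1 i' = i ∧ q e.1.2 j' = j then
              g (pIdx e i j) * μ (pIdx e i' j') else 0 :=
          Finset.sum_congr rfl fun i _ => Finset.sum_comm
      _ = ∑ i' : X e.1.1, ∑ i : X e.1.1, ∑ j : X e.1.2, ∑ j' : X e.1.2,
            if q e.1.1 i' = i ∧ q e.1.2 j' = j then
              g (pIdx e i j) * μ (pIdx e i' j') else 0 :=
          Finset.sum_comm
      _ = ∑ i' : X e.1.1, ∑ i : X e.1.1, ∑ j' : X e.1.2, ∑ j : X e.1.2,
            if q e.1.1 i' = i ∧ q e.1.2 j' = j then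
              g (pIdx e i j) * μ (pIdx e i' j') else 0 :=
          Finset.sum_congr rfl fun i' _ => Finset.sum_congr rfl fun i _ =>
            Finset.sum_comm
      _ = ∑ i' : X e.1.1, ∑ j' : X e.1.2, ∑ i : X e.1.1, ∑ j : X e.1.2,
            if q e.1.1 i' = i ∧ q e.1.2 j' = j then
              g (pIdx e i j) * μ (pIdx e i' j') else 0 :=
          Finset.sum_congr rfl fun i' _ => Finset.sum_comm
      _ = ∑ i' : X e.1.1, ∑ j' : X e.1.2,
            g (pIdx e (q e.1.1 i') (q e.1.2 j')) * μ (pIdx e i' j') := by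
          refine Finset.sum_congr rfl fun i' _ => ?_
          refine Finset.sum_congr rfl fun j' _ => ?_
          simp [ite_and]
  rw [hc, Finset.sum_congr rfl fun v _ => hu v,
    Finset.sum_congr rfl fun e _ => hp e]

end Dot

section S1

set_option linter.unusedSectionVars false

variable (f : GVec X E) (y : ∀ v, X v) (Y Z : ∀ v, Finset (X v))

/-- `⟨ḡ^Z, μ⟩ ≤ ⟨ḡ^Y, μ⟩ − ⟨ḡ^Y, [q]μ⟩` for nonnegative `μ`, where `q = subToOne y Z`. -/
lemma dotp_red_le (hY : ∀ v, y v ∉ Y v) (hZY : ∀ v, Z v ⊆ Y v)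
    (μ : GVec X E) (hpos : ∀ idx, 0 ≤ μ idx) :
    dotp (reduced f y Z) μ ≤
      dotp (reduced f y Y) μ - dotp (reduced f y Y) (Pmap (subToOne y Z) μ) := by
  rw [dotp_Pmap]
  rw [dotp_expand (reduced f y Z) μ, dotp_expand (reduced f y Y) μ,
    dotp_expand (Padj (subToOne y Z) (reduced f y Y)) μ]
  have hc : reduced f y Z cIdx * μ cIdx
      = reduced f y Y cIdx * μ cIdx
        - Padj (subToOne y Z) (reduced f y Y) cIdx * μ cIdx := by
    rw [reduced_c, Padj_c, reduced_c]; ring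
  have hu : ∀ v : V, (∑ i : X v, reduced f y Z (uIdx v i) * μ (uIdx v i))
      = ∑ i : X v, (reduced f y Y (uIdx v i) * μ (uIdx v i)
          - Padj (subToOne y Z) (reduced f y Y) (uIdx v i) * μ (uIdx v i)) := by
    intro v
    refine Finset.sum_congr rfl fun i _ => ?_
    rw [Padj_un, red_un_pt f y Y Z hY hZY]; ring
  have hp : ∀ e ∈ (Finset.univ : Finset {e : V × V // e ∈ E}),
      (∑ i : X e.1.1, ∑ j : X e.1.2, reduced f y Z (pIdx e i j) * μ (pIdx e i j))
      ≤ ∑ i : X e.1.1, ∑ j : X e.1.2,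
          (reduced f y Y (pIdx e i j) * μ (pIdx e i j)
            - Padj (subToOne y Z) (reduced f y Y) (pIdx e i j) * μ (pIdx e i j)) := by
    intro e _
    refine Finset.sum_le_sum fun i _ => Finset.sum_le_sum fun j _ => ?_
    rw [Padj_pw, ← sub_mul]
    exact mul_le_mul_of_nonneg_right (red_pw_pt f y Y Z hY hZY e i j) (hpos _)
  calc reduced f y Z cIdx * μ cIdx
        + (∑ v : V, ∑ i : X v, reduced f y Z (uIdx v i) * μ (uIdx v i))
        + ∑ e : {e : V × V // e ∈ E}, ∑ i : X e.1.1, ∑ j : X e.1.2,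
            reduced f y Z (pIdx e i j) * μ (pIdx e i j)
      ≤ (reduced f y Y cIdx * μ cIdx
          - Padj (subToOne y Z) (reduced f y Y) cIdx * μ cIdx)
        + (∑ v : V, ∑ i : X v, (reduced f y Y (uIdx v i) * μ (uIdx v i)
            - Padj (subToOne y Z) (reduced f y Y) (uIdx v i) * μ (uIdx v i)))
        + ∑ e : {e : V × V // e ∈ E}, ∑ i : X e.1.1, ∑ j : X e.1.2,
            (reduced f y Y (pIdx e i j) * μ (pIdx e i j)
              - Padj (subToOne y Z) (reduced f y Y) (pIdx e i j) * μ (pIdx e i j)) := by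
        refine add_le_add (add_le_add (le_of_eq hc)
          (le_of_eq (Finset.sum_congr rfl fun v _ => hu v))) (Finset.sum_le_sum hp)
    _ = _ := by
        simp only [Finset.sum_sub_distrib]
        ring

end S1

section CoreDefs

set_option linter.unusedSectionVars false

attribute [local instance] Classical.propDecidable

/-- The global scaling factor `t = 1/(8|E|+8)`. -/
def tE (E : Finset (V × V)) : ℝ := ((8 : ℝ) * E.card + 8)⁻¹

lemma tE_pos : 0 < tE E := by
  have : (0:ℝ) < 8 * E.card + 8 := by positivity
  exact inv_pos.mpr this

lemma tE_le_eighth : tE E ≤ 1 / 8 := by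
  rw [tE]
  rw [inv_eq_one_div]
  have h8 : (0:ℝ) < 8 := by norm_num
  have : (0:ℝ) < 8 * E.card + 8 := by positivity
  rw [div_le_div_iff₀ this h8]
  have : (0:ℝ) ≤ (E.card : ℝ) := Nat.cast_nonneg _
  linarith

lemma tE_bound : tE E * (2 * (E.card : ℝ) + 1) ≤ 1 / 4 := by
  rw [tE, inv_mul_eq_div]
  have h4 : (0:ℝ) < 4 := by norm_num
  have hden : (0:ℝ) < 8 * E.card + 8 := by positivity
  rw [div_le_div_iff₀ hden h4]
  have : (0:ℝ) ≤ (E.card : ℝ) := Nat.cast_nonneg _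
  linarith

variable (f : GVec X E) (y : ∀ v, X v) (Z : ∀ v, Finset (X v))
  (hZ : ∀ v, y v ∉ Z v) (μ : GVec X E)

/-- Per-edge argmin of `g(i, ·)` over the complement of `Z_v`. -/
def jstar (e : {e : V × V // e ∈ E}) (i : X e.1.1) : X e.1.2 :=
  (Finset.exists_min_image ((Z e.1.2)ᶜ) (fun j' => gvec f y Z (pIdx e i j'))
    ⟨y e.1.2, Finset.mem_compl.mpr (hZ e.1.2)⟩).choose

lemma jstar_spec (e : {e : V × V // e ∈ E}) (i : X e.1.1) :
    jstar f y Z hZ e i ∉ Z e.1.2 ∧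
      ∀ j ∉ Z e.1.2, gvec f y Z (pIdx e i (jstar f y Z hZ e i)) ≤
        gvec f y Z (pIdx e i j) := by
  have h := (Finset.exists_min_image ((Z e.1.2)ᶜ)
    (fun j' => gvec f y Z (pIdx e i j'))
    ⟨y e.1.2, Finset.mem_compl.mpr (hZ e.1.2)⟩).choose_spec
  exact ⟨Finset.mem_compl.mp h.1, fun j hj => h.2 j (Finset.mem_compl.mpr hj)⟩

lemma gq_jstar (e : {e : V × V // e ∈ E}) (i : X e.1.1) :
    gvec f y Z (pIdx e i (jstar f y Z hZ e i)) = duv f y Z e i := by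
  obtain ⟨h1, h2⟩ := jstar_spec f y Z hZ e i
  refine le_antisymm ?_ ?_
  · exact aux_le_sInf (Z e.1.2) _ ⟨y e.1.2, hZ e.1.2⟩ h2
  · unfold duv
    exact aux_sInf_le (Z e.1.2) _ h1

/-- Per-edge argmin of `g(·, j)` over the complement of `Z_u`. -/
def istar (e : {e : V × V // e ∈ E}) (j : X e.1.2) : X e.1.1 :=
  (Finset.exists_min_image ((Z e.1.1)ᶜ) (fun i' => gvec f y Z (pIdx e i' j))
    ⟨y e.1.1, Finset.mem_compl.mpr (hZ e.1.1)⟩).choose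

lemma istar_spec (e : {e : V × V // e ∈ E}) (j : X e.1.2) :
    istar f y Z hZ e j ∉ Z e.1.1 ∧
      ∀ i ∉ Z e.1.1, gvec f y Z (pIdx e (istar f y Z hZ e j) j) ≤
        gvec f y Z (pIdx e i j) := by
  have h := (Finset.exists_min_image ((Z e.1.1)ᶜ)
    (fun i' => gvec f y Z (pIdx e i' j))
    ⟨y e.1.1, Finset.mem_compl.mpr (hZ e.1.1)⟩).choose_spec
  exact ⟨Finset.mem_compl.mp h.1, fun i hi => h.2 i (Finset.mem_compl.mpr hi)⟩

lemma gq_istar (e : {e : V × V // e ∈ E}) (j : X e.1.2) :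
    gvec f y Z (pIdx e (istar f y Z hZ e j) j) = dvu f y Z e j := by
  obtain ⟨h1, h2⟩ := istar_spec f y Z hZ e j
  refine le_antisymm ?_ ?_
  · exact aux_le_sInf (Z e.1.1) _ ⟨y e.1.1, hZ e.1.1⟩ h2
  · unfold dvu
    exact aux_sInf_le (Z e.1.1) _ h1

/-- The branch predicate: on `(Z,Z)` pairs, is `Δ_{vu}(j) + Δ_{uv}(i) ≤ g(i,j)`? -/
def btype (e : {e : V × V // e ∈ E}) (i : X e.1.1) (j : X e.1.2) : Prop :=
  dvu f y Z e j + duv f y Z e i ≤ gvec f y Z (pIdx e i j)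

/-- Mass of row `i ∈ Z_u` that is rerouted to `(i, j*(i))`. -/
def rowmass (e : {e : V × V // e ∈ E}) (i : X e.1.1) : ℝ :=
  ∑ j : X e.1.2, if j ∈ Z e.1.2 then
    (if btype f y Z e i j then μ (pIdx e i j) else 0) else μ (pIdx e i j)

/-- Mass of column `j ∈ Z_v` that is rerouted to `(i*(j), j)`. -/
def colmass (e : {e : V × V // e ∈ E}) (j : X e.1.2) : ℝ :=
  ∑ i : X e.1.1, if i ∈ Z e.1.1 then
    (if btype f y Z e i j then μ (pIdx e i j) else 0) else μ (pIdx e i j)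

/-- The costly (non-fill) part of the pairwise component of `ν` (before scaling). -/
def nonfill (e : {e : V × V // e ∈ E}) (i : X e.1.1) (j : X e.1.2) : ℝ :=
  if i ∈ Z e.1.1 then
    if j ∈ Z e.1.2 then (if btype f y Z e i j then 0 else μ (pIdx e i j))
    else (if j = jstar f y Z hZ e i then rowmass f y Z μ e i else 0)
  else
    if j ∈ Z e.1.2 then (if i = istar f y Z hZ e j then colmass f y Z μ e j else 0)
    else 0

def margU (e : {e : V × V // e ∈ E}) (i : X e.1.1) : ℝ :=
  ∑ j : X e.1.2, nonfill f y Z hZ μ e i j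

def margV (e : {e : V × V // e ∈ E}) (j : X e.1.2) : ℝ :=
  ∑ i : X e.1.1, nonfill f y Z hZ μ e i j

def EUx (e : {e : V × V // e ∈ E}) (i : X e.1.1) : ℝ :=
  if i ∈ Z e.1.1 then 0 else margU f y Z hZ μ e i

def EVx (e : {e : V × V // e ∈ E}) (j : X e.1.2) : ℝ :=
  if j ∈ Z e.1.2 then 0 else margV f y Z hZ μ e j

/-- Total non-fill demand at node `w`, label `i` (over all incident edges). -/
def DD (w : V) (i : X w) : ℝ :=
  ∑ e : {e : V × V // e ∈ E},
    ((∑ i' : X e.1.1, if (⟨e.1.1, i'⟩ : Σ v, X v) = ⟨w, i⟩ then EUx f y Z hZ μ e i' else 0)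
      + (∑ j' : X e.1.2, if (⟨e.1.2, j'⟩ : Σ v, X v) = ⟨w, i⟩ then EVx f y Z hZ μ e j' else 0))

/-- Total `Z`-mass of `μ` at node `w`. -/
def wZm (w : V) : ℝ := ∑ i : X w, if i ∈ Z w then μ (uIdx w i) else 0

/-- The slack put on the label `y_w`. -/
def RR (w : V) : ℝ :=
  1 - tE E * wZm Z μ w - tE E * ∑ i : X w, DD f y Z hZ μ w i

/-- Unary components of `ν`. -/
def nuUn (w : V) (i : X w) : ℝ :=
  if i ∈ Z w then tE E * μ (uIdx w i)
  else tE E * DD f y Z hZ μ w i + (if i = y w then RR f y Z hZ μ w else 0)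

def rowneed (e : {e : V × V // e ∈ E}) (i : X e.1.1) : ℝ :=
  nuUn f y Z hZ μ e.1.1 i - tE E * margU f y Z hZ μ e i

def colneed (e : {e : V × V // e ∈ E}) (j : X e.1.2) : ℝ :=
  nuUn f y Z hZ μ e.1.2 j - tE E * margV f y Z hZ μ e j

def tote (e : {e : V × V // e ∈ E}) : ℝ :=
  ∑ i : X e.1.1, if i ∈ Z e.1.1 then 0 else rowneed f y Z hZ μ e i

/-- The witness `ν ∈ Λ` with `⟨g^q, ν⟩ = t·⟨ḡ^Z, μ⟩`. -/
def nuW : GVec X E := fun idx =>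
  match idx with
  | Sum.inl _ => 1
  | Sum.inr (Sum.inl ⟨w, i⟩) => nuUn f y Z hZ μ w i
  | Sum.inr (Sum.inr ⟨e, (i, j)⟩) =>
      tE E * nonfill f y Z hZ μ e i j +
        (if i ∈ Z e.1.1 ∨ j ∈ Z e.1.2 then 0
          else rowneed f y Z hZ μ e i * colneed f y Z hZ μ e j / tote f y Z hZ μ e)

lemma nuW_c : nuW f y Z hZ μ cIdx = 1 := rfl

lemma nuW_un (w : V) (i : X w) : nuW f y Z hZ μ (uIdx w i) = nuUn f y Z hZ μ w i := rfl

lemma nuW_pw (e : {e : V × V // e ∈ E}) (i : X e.1.1) (j : X e.1.2) :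
    nuW f y Z hZ μ (pIdx e i j) =
      tE E * nonfill f y Z hZ μ e i j +
        (if i ∈ Z e.1.1 ∨ j ∈ Z e.1.2 then 0
          else rowneed f y Z hZ μ e i * colneed f y Z hZ μ e j / tote f y Z hZ μ e) := rfl

end CoreDefs

section CoreLemmas

set_option linter.unusedSectionVars false
set_option maxHeartbeats 1000000

attribute [local instance] Classical.propDecidable

variable (f : GVec X E) (y : ∀ v, X v) (Z : ∀ v, Finset (X v))
  (hZ : ∀ v, y v ∉ Z v) (μ : GVec X E)

/-- Column-total of the rerouted column masses. -/
def CMe (e : {e : V × V // e ∈ E}) : ℝ :=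
  ∑ j : X e.1.2, if j ∈ Z e.1.2 then colmass f y Z μ e j else 0

/-- Row-total of the rerouted row masses. -/
def RMe (e : {e : V × V // e ∈ E}) : ℝ :=
  ∑ i : X e.1.1, if i ∈ Z e.1.1 then rowmass f y Z μ e i else 0

section Nonneg

variable (hpos : ∀ idx, 0 ≤ μ idx)
include hpos

lemma rowmass_nonneg (e : {e : V × V // e ∈ E}) (i : X e.1.1) :
    0 ≤ rowmass f y Z μ e i := by
  refine Finset.sum_nonneg fun j _ => ?_
  split_ifs <;> first | exact hpos _ | exact le_rfl

lemma colmass_nonneg (e : {e : V × V // e ∈ E}) (j : X e.1.2) :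
    0 ≤ colmass f y Z μ e j := by
  refine Finset.sum_nonneg fun i _ => ?_
  split_ifs <;> first | exact hpos _ | exact le_rfl

lemma nonfill_nonneg (e : {e : V × V // e ∈ E}) (i : X e.1.1) (j : X e.1.2) :
    0 ≤ nonfill f y Z hZ μ e i j := by
  unfold nonfill
  split_ifs <;>
    first
      | exact le_rfl
      | exact hpos _
      | exact rowmass_nonneg f y Z μ hpos e i
      | exact colmass_nonneg f y Z μ hpos e j

lemma margU_nonneg (e : {e : V × V // e ∈ E}) (i : X e.1.1) :
    0 ≤ margU f y Z hZ μ e i :=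
  Finset.sum_nonneg fun j _ => nonfill_nonneg f y Z hZ μ hpos e i j

lemma margV_nonneg (e : {e : V × V // e ∈ E}) (j : X e.1.2) :
    0 ≤ margV f y Z hZ μ e j :=
  Finset.sum_nonneg fun i _ => nonfill_nonneg f y Z hZ μ hpos e i j

lemma EUx_nonneg (e : {e : V × V // e ∈ E}) (i : X e.1.1) :
    0 ≤ EUx f y Z hZ μ e i := by
  unfold EUx
  split_ifs
  · exact le_rfl
  · exact margU_nonneg f y Z hZ μ hpos e i

lemma EVx_nonneg (e : {e : V × V // e ∈ E}) (j : X e.1.2) :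
    0 ≤ EVx f y Z hZ μ e j := by
  unfold EVx
  split_ifs
  · exact le_rfl
  · exact margV_nonneg f y Z hZ μ hpos e j

lemma DD_nonneg (w : V) (i : X w) : 0 ≤ DD f y Z hZ μ w i := by
  refine Finset.sum_nonneg fun e _ => add_nonneg ?_ ?_
  · refine Finset.sum_nonneg fun i' _ => ?_
    split_ifs
    · exact EUx_nonneg f y Z hZ μ hpos e i'
    · exact le_rfl
  · refine Finset.sum_nonneg fun j' _ => ?_
    split_ifs
    · exact EVx_nonneg f y Z hZ μ hpos e j'
    · exact le_rfl

lemma wZm_nonneg (w : V) : 0 ≤ wZm Z μ w := by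
  refine Finset.sum_nonneg fun i _ => ?_
  split_ifs
  · exact hpos _
  · exact le_rfl

end Nonneg

section Decomp

lemma row_decomp (e : {e : V × V // e ∈ E}) (i : X e.1.1) :
    rowmass f y Z μ e i +
      (∑ j : X e.1.2, if j ∈ Z e.1.2 then
        (if btype f y Z e i j then 0 else μ (pIdx e i j)) else 0)
      = ∑ j : X e.1.2, μ (pIdx e i j) := by
  rw [rowmass, ← Finset.sum_add_distrib]
  refine Finset.sum_congr rfl fun j _ => ?_
  split_ifs <;> ring

lemma col_decomp (e : {e : V × V // e ∈ E}) (j : X e.1.2) :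
    colmass f y Z μ e j +
      (∑ i : X e.1.1, if i ∈ Z e.1.1 then
        (if btype f y Z e i j then 0 else μ (pIdx e i j)) else 0)
      = ∑ i : X e.1.1, μ (pIdx e i j) := by
  rw [colmass, ← Finset.sum_add_distrib]
  refine Finset.sum_congr rfl fun i _ => ?_
  split_ifs <;> ring

lemma margU_eq_tot (e : {e : V × V // e ∈ E}) {i : X e.1.1} (hi : i ∈ Z e.1.1) :
    margU f y Z hZ μ e i = ∑ j : X e.1.2, μ (pIdx e i j) := by
  have h1 : margU f y Z hZ μ e i
      = (∑ j : X e.1.2, if j ∈ Z e.1.2 then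
          (if btype f y Z e i j then 0 else μ (pIdx e i j)) else 0)
        + ∑ j : X e.1.2, (if j = jstar f y Z hZ e i then rowmass f y Z μ e i else 0) := by
    rw [margU, ← Finset.sum_add_distrib]
    refine Finset.sum_congr rfl fun j _ => ?_
    unfold nonfill
    rw [if_pos hi]
    by_cases hj : j ∈ Z e.1.2
    · rw [if_pos hj, if_pos hj]
      have : j ≠ jstar f y Z hZ e i := fun h => (jstar_spec f y Z hZ e i).1 (h ▸ hj)
      rw [if_neg this, add_zero]
    · rw [if_neg hj, if_neg hj, zero_add]
  rw [h1, Finset.sum_ite_eq' Finset.univ (jstar f y Z hZ e i)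
    (fun _ => rowmass f y Z μ e i), if_pos (Finset.mem_univ _)]
  have := row_decomp f y Z μ e i
  linarith

lemma margV_eq_tot (e : {e : V × V // e ∈ E}) {j : X e.1.2} (hj : j ∈ Z e.1.2) :
    margV f y Z hZ μ e j = ∑ i : X e.1.1, μ (pIdx e i j) := by
  have h1 : margV f y Z hZ μ e j
      = (∑ i : X e.1.1, if i ∈ Z e.1.1 then
          (if btype f y Z e i j then 0 else μ (pIdx e i j)) else 0)
        + ∑ i : X e.1.1, (if i = istar f y Z hZ e j then colmass f y Z μ e j else 0) := by
    rw [margV, ← Finset.sum_add_distrib]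
    refine Finset.sum_congr rfl fun i _ => ?_
    unfold nonfill
    by_cases hi : i ∈ Z e.1.1
    · rw [if_pos hi, if_pos hj, if_pos hi]
      have : i ≠ istar f y Z hZ e j := fun h => (istar_spec f y Z hZ e j).1 (h ▸ hi)
      rw [if_neg this, add_zero]
    · rw [if_neg hi, if_pos hj, if_neg hi, zero_add]
  rw [h1, Finset.sum_ite_eq' Finset.univ (istar f y Z hZ e j)
    (fun _ => colmass f y Z μ e j), if_pos (Finset.mem_univ _)]
  have := col_decomp f y Z μ e j
  linarith

lemma margU_out (e : {e : V × V // e ∈ E}) {i : X e.1.1} (hi : i ∉ Z e.1.1) :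
    margU f y Z hZ μ e i = ∑ j : X e.1.2,
      (if j ∈ Z e.1.2 then
        (if i = istar f y Z hZ e j then colmass f y Z μ e j else 0) else 0) := by
  rw [margU]
  refine Finset.sum_congr rfl fun j _ => ?_
  unfold nonfill
  rw [if_neg hi]

lemma margV_out (e : {e : V × V // e ∈ E}) {j : X e.1.2} (hj : j ∉ Z e.1.2) :
    margV f y Z hZ μ e j = ∑ i : X e.1.1,
      (if i ∈ Z e.1.1 then
        (if j = jstar f y Z hZ e i then rowmass f y Z μ e i else 0) else 0) := by
  rw [margV]
  refine Finset.sum_congr rfl fun i _ => ?_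
  unfold nonfill
  by_cases hi : i ∈ Z e.1.1
  · rw [if_pos hi, if_neg hj, if_pos hi]
  · rw [if_neg hi, if_neg hj, if_neg hi]

lemma sum_EUx (e : {e : V × V // e ∈ E}) :
    (∑ i : X e.1.1, EUx f y Z hZ μ e i) = CMe f y Z μ e := by
  have h1 : ∀ i : X e.1.1, EUx f y Z hZ μ e i
      = ∑ j : X e.1.2, (if i ∈ Z e.1.1 then 0 else
          (if j ∈ Z e.1.2 then
            (if i = istar f y Z hZ e j then colmass f y Z μ e j else 0) else 0)) := by
    intro i
    unfold EUx
    by_cases hi : i ∈ Z e.1.1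
    · rw [if_pos hi]
      simp [hi]
    · rw [if_neg hi, margU_out f y Z hZ μ e hi]
      refine Finset.sum_congr rfl fun j _ => ?_
      rw [if_neg hi]
  calc (∑ i : X e.1.1, EUx f y Z hZ μ e i)
      = ∑ i : X e.1.1, ∑ j : X e.1.2, (if i ∈ Z e.1.1 then 0 else
          (if j ∈ Z e.1.2 then
            (if i = istar f y Z hZ e j then colmass f y Z μ e j else 0) else 0)) :=
        Finset.sum_congr rfl fun i _ => h1 i
    _ = ∑ j : X e.1.2, ∑ i : X e.1.1, (if i ∈ Z e.1.1 then 0 else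
          (if j ∈ Z e.1.2 then
            (if i = istar f y Z hZ e j then colmass f y Z μ e j else 0) else 0)) :=
        Finset.sum_comm
    _ = CMe f y Z μ e := by
        refine Finset.sum_congr rfl fun j _ => ?_
        by_cases hj : j ∈ Z e.1.2
        · rw [if_pos hj]
          have hpt : ∀ i : X e.1.1, (if i ∈ Z e.1.1 then 0 else
              (if j ∈ Z e.1.2 then
                (if i = istar f y Z hZ e j then colmass f y Z μ e j else 0) else 0))
              = (if i = istar f y Z hZ e j then colmass f y Z μ e j else 0) := by
            intro i
            by_cases hi : i ∈ Z e.1.1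
            · rw [if_pos hi]
              have : i ≠ istar f y Z hZ e j := fun h => (istar_spec f y Z hZ e j).1 (h ▸ hi)
              rw [if_neg this]
            · rw [if_neg hi, if_pos hj]
          rw [Finset.sum_congr rfl fun i _ => hpt i,
            Finset.sum_ite_eq' Finset.univ (istar f y Z hZ e j)
              (fun _ => colmass f y Z μ e j), if_pos (Finset.mem_univ _)]
        · rw [if_neg hj]
          refine Finset.sum_eq_zero fun i _ => ?_
          by_cases hi : i ∈ Z e.1.1
          · rw [if_pos hi]
          · rw [if_neg hi, if_neg hj]

lemma sum_EVx (e : {e : V × V // e ∈ E}) :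
    (∑ j : X e.1.2, EVx f y Z hZ μ e j) = RMe f y Z μ e := by
  have h1 : ∀ j : X e.1.2, EVx f y Z hZ μ e j
      = ∑ i : X e.1.1, (if j ∈ Z e.1.2 then 0 else
          (if i ∈ Z e.1.1 then
            (if j = jstar f y Z hZ e i then rowmass f y Z μ e i else 0) else 0)) := by
    intro j
    unfold EVx
    by_cases hj : j ∈ Z e.1.2
    · rw [if_pos hj]
      simp [hj]
    · rw [if_neg hj, margV_out f y Z hZ μ e hj]
      refine Finset.sum_congr rfl fun i _ => ?_
      rw [if_neg hj]
  calc (∑ j : X e.1.2, EVx f y Z hZ μ e j)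
      = ∑ j : X e.1.2, ∑ i : X e.1.1, (if j ∈ Z e.1.2 then 0 else
          (if i ∈ Z e.1.1 then
            (if j = jstar f y Z hZ e i then rowmass f y Z μ e i else 0) else 0)) :=
        Finset.sum_congr rfl fun j _ => h1 j
    _ = ∑ i : X e.1.1, ∑ j : X e.1.2, (if j ∈ Z e.1.2 then 0 else
          (if i ∈ Z e.1.1 then
            (if j = jstar f y Z hZ e i then rowmass f y Z μ e i else 0) else 0)) :=
        Finset.sum_comm
    _ = RMe f y Z μ e := by
        refine Finset.sum_congr rfl fun i _ => ?_
        by_cases hi : i ∈ Z e.1.1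
        · rw [if_pos hi]
          have hpt : ∀ j : X e.1.2, (if j ∈ Z e.1.2 then 0 else
              (if i ∈ Z e.1.1 then
                (if j = jstar f y Z hZ e i then rowmass f y Z μ e i else 0) else 0))
              = (if j = jstar f y Z hZ e i then rowmass f y Z μ e i else 0) := by
            intro j
            by_cases hj : j ∈ Z e.1.2
            · rw [if_pos hj]
              have : j ≠ jstar f y Z hZ e i := fun h => (jstar_spec f y Z hZ e i).1 (h ▸ hj)
              rw [if_neg this]
            · rw [if_neg hj, if_pos hi]
          rw [Finset.sum_congr rfl fun j _ => hpt j,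
            Finset.sum_ite_eq' Finset.univ (jstar f y Z hZ e i)
              (fun _ => rowmass f y Z μ e i), if_pos (Finset.mem_univ _)]
        · rw [if_neg hi]
          refine Finset.sum_eq_zero fun j _ => ?_
          by_cases hj : j ∈ Z e.1.2
          · rw [if_pos hj]
          · rw [if_neg hj, if_neg hi]

/-- The key counting identity `w_u + CM = w_v + RM` for each edge. -/
lemma counting_identity (hμ : μ ∈ localPolytope X E) (e : {e : V × V // e ∈ E}) :
    wZm Z μ e.1.1 + CMe f y Z μ e = wZm Z μ e.1.2 + RMe f y Z μ e := by
  obtain ⟨hp0, hc1, hun, hrow, hcol⟩ := hμ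
  have hu : wZm Z μ e.1.1 = RMe f y Z μ e
      + ∑ i : X e.1.1, (if i ∈ Z e.1.1 then
          (∑ j : X e.1.2, if j ∈ Z e.1.2 then
            (if btype f y Z e i j then 0 else μ (pIdx e i j)) else 0) else 0) := by
    rw [wZm, RMe, ← Finset.sum_add_distrib]
    refine Finset.sum_congr rfl fun i _ => ?_
    by_cases hi : i ∈ Z e.1.1
    · rw [if_pos hi, if_pos hi, if_pos hi, ← hrow e i, ← row_decomp f y Z μ e i]
    · rw [if_neg hi, if_neg hi, if_neg hi, add_zero]
  have hv : wZm Z μ e.1.2 = CMe f y Z μ e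
      + ∑ j : X e.1.2, (if j ∈ Z e.1.2 then
          (∑ i : X e.1.1, if i ∈ Z e.1.1 then
            (if btype f y Z e i j then 0 else μ (pIdx e i j)) else 0) else 0) := by
    rw [wZm, CMe, ← Finset.sum_add_distrib]
    refine Finset.sum_congr rfl fun j _ => ?_
    by_cases hj : j ∈ Z e.1.2
    · rw [if_pos hj, if_pos hj, if_pos hj, ← hcol e j, ← col_decomp f y Z μ e j]
    · rw [if_neg hj, if_neg hj, if_neg hj, add_zero]
  have hsw : (∑ i : X e.1.1, (if i ∈ Z e.1.1 then
        (∑ j : X e.1.2, if j ∈ Z e.1.2 then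
          (if btype f y Z e i j then 0 else μ (pIdx e i j)) else 0) else 0))
      = ∑ j : X e.1.2, (if j ∈ Z e.1.2 then
          (∑ i : X e.1.1, if i ∈ Z e.1.1 then
            (if btype f y Z e i j then 0 else μ (pIdx e i j)) else 0) else 0) := by
    have h1 : ∀ i : X e.1.1, (if i ∈ Z e.1.1 then
        (∑ j : X e.1.2, if j ∈ Z e.1.2 then
          (if btype f y Z e i j then 0 else μ (pIdx e i j)) else 0) else 0)
        = ∑ j : X e.1.2, (if i ∈ Z e.1.1 then
            (if j ∈ Z e.1.2 then
              (if btype f y Z e i j then 0 else μ (pIdx e i j)) else 0) else 0) := by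
      intro i
      split_ifs <;> simp
    have h2 : ∀ j : X e.1.2, (if j ∈ Z e.1.2 then
        (∑ i : X e.1.1, if i ∈ Z e.1.1 then
          (if btype f y Z e i j then 0 else μ (pIdx e i j)) else 0) else 0)
        = ∑ i : X e.1.1, (if j ∈ Z e.1.2 then
            (if i ∈ Z e.1.1 then
              (if btype f y Z e i j then 0 else μ (pIdx e i j)) else 0) else 0) := by
      intro j
      split_ifs <;> simp
    rw [Finset.sum_congr rfl fun i _ => h1 i, Finset.sum_congr rfl fun j _ => h2 j,
      Finset.sum_comm]
    refine Finset.sum_congr rfl fun j _ => Finset.sum_congr rfl fun i _ => ?_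
    split_ifs <;> rfl
  rw [hu, hv]
  rw [hsw]
  ring

end Decomp

end CoreLemmas

section CoreLemmas2

set_option linter.unusedSectionVars false
set_option maxHeartbeats 1000000

attribute [local instance] Classical.propDecidable

variable (f : GVec X E) (y : ∀ v, X v) (Z : ∀ v, Finset (X v))
  (hZ : ∀ v, y v ∉ Z v) (μ : GVec X E)

lemma DD_zero (w : V) {i : X w} (hi : i ∈ Z w) : DD f y Z hZ μ w i = 0 := by
  refine Finset.sum_eq_zero fun e _ => ?_
  have h1 : (∑ i' : X e.1.1,
      if (⟨e.1.1, i'⟩ : Σ v, X v) = ⟨w, i⟩ then EUx f y Z hZ μ e i' else 0) = 0 := by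
    refine Finset.sum_eq_zero fun i' _ => ?_
    by_cases h : (⟨e.1.1, i'⟩ : Σ v, X v) = ⟨w, i⟩
    · rw [if_pos h]
      obtain ⟨h1, h2⟩ := Sigma.mk.inj_iff.mp h
      subst h1
      have : i' = i := eq_of_heq h2
      subst this
      rw [EUx, if_pos hi]
    · rw [if_neg h]
  have h2 : (∑ j' : X e.1.2,
      if (⟨e.1.2, j'⟩ : Σ v, X v) = ⟨w, i⟩ then EVx f y Z hZ μ e j' else 0) = 0 := by
    refine Finset.sum_eq_zero fun j' _ => ?_
    by_cases h : (⟨e.1.2, j'⟩ : Σ v, X v) = ⟨w, i⟩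
    · rw [if_pos h]
      obtain ⟨h1, h2⟩ := Sigma.mk.inj_iff.mp h
      subst h1
      have : j' = i := eq_of_heq h2
      subst this
      rw [EVx, if_pos hi]
    · rw [if_neg h]
  rw [h1, h2, add_zero]

variable (hpos : ∀ idx, 0 ≤ μ idx)
include hpos

lemma DD_term_nonneg (w : V) (i : X w) (e : {e : V × V // e ∈ E}) :
    0 ≤ (∑ i' : X e.1.1,
        if (⟨e.1.1, i'⟩ : Σ v, X v) = ⟨w, i⟩ then EUx f y Z hZ μ e i' else 0)
      + ∑ j' : X e.1.2,
        if (⟨e.1.2, j'⟩ : Σ v, X v) = ⟨w, i⟩ then EVx f y Z hZ μ e j' else 0 := by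
  refine add_nonneg (Finset.sum_nonneg fun i' _ => ?_) (Finset.sum_nonneg fun j' _ => ?_)
  · split_ifs
    · exact EUx_nonneg f y Z hZ μ hpos e i'
    · exact le_rfl
  · split_ifs
    · exact EVx_nonneg f y Z hZ μ hpos e j'
    · exact le_rfl

lemma DD_ge_EU (e : {e : V × V // e ∈ E}) (i : X e.1.1) :
    EUx f y Z hZ μ e i ≤ DD f y Z hZ μ e.1.1 i := by
  have hterm : EUx f y Z hZ μ e i ≤
      (∑ i' : X e.1.1,
        if (⟨e.1.1, i'⟩ : Σ v, X v) = ⟨e.1.1, i⟩ then EUx f y Z hZ μ e i' else 0)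
      + ∑ j' : X e.1.2,
        if (⟨e.1.2, j'⟩ : Σ v, X v) = ⟨e.1.1, i⟩ then EVx f y Z hZ μ e j' else 0 := by
    have h1 : (∑ i' : X e.1.1,
        if (⟨e.1.1, i'⟩ : Σ v, X v) = ⟨e.1.1, i⟩ then EUx f y Z hZ μ e i' else 0)
        = EUx f y Z hZ μ e i := by
      have : ∀ i' : X e.1.1, ((⟨e.1.1, i'⟩ : Σ v, X v) = ⟨e.1.1, i⟩) ↔ i' = i := by
        intro i'
        rw [Sigma.mk.inj_iff]
        simp
      rw [Finset.sum_congr rfl fun i' _ => by rw [if_congr (this i') rfl rfl]]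
      rw [Finset.sum_ite_eq' Finset.univ i (fun i' => EUx f y Z hZ μ e i'),
        if_pos (Finset.mem_univ _)]
    rw [h1]
    have h2 : 0 ≤ ∑ j' : X e.1.2,
        if (⟨e.1.2, j'⟩ : Σ v, X v) = ⟨e.1.1, i⟩ then EVx f y Z hZ μ e j' else 0 := by
      refine Finset.sum_nonneg fun j' _ => ?_
      split_ifs
      · exact EVx_nonneg f y Z hZ μ hpos e j'
      · exact le_rfl
    linarith
  refine le_trans hterm ?_
  exact Finset.single_le_sum
    (fun e' _ => DD_term_nonneg f y Z hZ μ hpos e.1.1 i e') (Finset.mem_univ e)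

lemma DD_ge_EV (e : {e : V × V // e ∈ E}) (j : X e.1.2) :
    EVx f y Z hZ μ e j ≤ DD f y Z hZ μ e.1.2 j := by
  have hterm : EVx f y Z hZ μ e j ≤
      (∑ i' : X e.1.1,
        if (⟨e.1.1, i'⟩ : Σ v, X v) = ⟨e.1.2, j⟩ then EUx f y Z hZ μ e i' else 0)
      + ∑ j' : X e.1.2,
        if (⟨e.1.2, j'⟩ : Σ v, X v) = ⟨e.1.2, j⟩ then EVx f y Z hZ μ e j' else 0 := by
    have h1 : (∑ j' : X e.1.2,
        if (⟨e.1.2, j'⟩ : Σ v, X v) = ⟨e.1.2, j⟩ then EVx f y Z hZ μ e j' else 0)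
        = EVx f y Z hZ μ e j := by
      have : ∀ j' : X e.1.2, ((⟨e.1.2, j'⟩ : Σ v, X v) = ⟨e.1.2, j⟩) ↔ j' = j := by
        intro j'
        rw [Sigma.mk.inj_iff]
        simp
      rw [Finset.sum_congr rfl fun j' _ => by rw [if_congr (this j') rfl rfl]]
      rw [Finset.sum_ite_eq' Finset.univ j (fun j' => EVx f y Z hZ μ e j'),
        if_pos (Finset.mem_univ _)]
    rw [h1]
    have h2 : 0 ≤ ∑ i' : X e.1.1,
        if (⟨e.1.1, i'⟩ : Σ v, X v) = ⟨e.1.2, j⟩ then EUx f y Z hZ μ e i' else 0 := by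
      refine Finset.sum_nonneg fun i' _ => ?_
      split_ifs
      · exact EUx_nonneg f y Z hZ μ hpos e i'
      · exact le_rfl
    linarith
  refine le_trans hterm ?_
  exact Finset.single_le_sum
    (fun e' _ => DD_term_nonneg f y Z hZ μ hpos e.1.2 j e') (Finset.mem_univ e)

end CoreLemmas2

section CoreLemmas3

set_option linter.unusedSectionVars false
set_option maxHeartbeats 1000000

attribute [local instance] Classical.propDecidable

variable (f : GVec X E) (y : ∀ v, X v) (Z : ∀ v, Finset (X v))
  (hZ : ∀ v, y v ∉ Z v) (μ : GVec X E) (hμ : μ ∈ localPolytope X E)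
include hμ

lemma total_mass (e : {e : V × V // e ∈ E}) :
    ∑ i : X e.1.1, ∑ j : X e.1.2, μ (pIdx e i j) = 1 := by
  obtain ⟨hp0, hc1, hun, hrow, hcol⟩ := hμ
  rw [Finset.sum_congr rfl fun i _ => hrow e i, hun e.1.1, hc1]

lemma wZm_le_one (w : V) : wZm Z μ w ≤ 1 := by
  obtain ⟨hp0, hc1, hun, hrow, hcol⟩ := hμ
  rw [wZm]
  calc (∑ i : X w, if i ∈ Z w then μ (uIdx w i) else 0)
      ≤ ∑ i : X w, μ (uIdx w i) := by
        refine Finset.sum_le_sum fun i _ => ?_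
        split_ifs
        · exact le_rfl
        · exact hp0 _
    _ = 1 := by rw [hun w, hc1]

lemma rowmass_le (e : {e : V × V // e ∈ E}) (i : X e.1.1) :
    rowmass f y Z μ e i ≤ μ (uIdx e.1.1 i) := by
  obtain ⟨hp0, hc1, hun, hrow, hcol⟩ := hμ
  have h := row_decomp f y Z μ e i
  have hnn : 0 ≤ ∑ j : X e.1.2, if j ∈ Z e.1.2 then
      (if btype f y Z e i j then 0 else μ (pIdx e i j)) else 0 := by
    refine Finset.sum_nonneg fun j _ => ?_
    split_ifs <;> first | exact le_rfl | exact hp0 _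
  rw [← hrow e i]
  linarith

lemma colmass_le (e : {e : V × V // e ∈ E}) (j : X e.1.2) :
    colmass f y Z μ e j ≤ μ (uIdx e.1.2 j) := by
  obtain ⟨hp0, hc1, hun, hrow, hcol⟩ := hμ
  have h := col_decomp f y Z μ e j
  have hnn : 0 ≤ ∑ i : X e.1.1, if i ∈ Z e.1.1 then
      (if btype f y Z e i j then 0 else μ (pIdx e i j)) else 0 := by
    refine Finset.sum_nonneg fun i _ => ?_
    split_ifs <;> first | exact le_rfl | exact hp0 _
  rw [← hcol e j]
  linarith

lemma CMe_le (e : {e : V × V // e ∈ E}) : CMe f y Z μ e ≤ wZm Z μ e.1.2 := by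
  rw [CMe, wZm]
  refine Finset.sum_le_sum fun j _ => ?_
  split_ifs
  · exact colmass_le f y Z μ hμ e j
  · exact le_rfl

lemma RMe_le (e : {e : V × V // e ∈ E}) : RMe f y Z μ e ≤ wZm Z μ e.1.1 := by
  rw [RMe, wZm]
  refine Finset.sum_le_sum fun i _ => ?_
  split_ifs
  · exact rowmass_le f y Z μ hμ e i
  · exact le_rfl

lemma sumDD_le (w : V) :
    ∑ i : X w, DD f y Z hZ μ w i ≤ 2 * (E.card : ℝ) := by
  have hpos := hμ.1
  have hswap : ∑ i : X w, DD f y Z hZ μ w i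
      = ∑ e : {e : V × V // e ∈ E},
          ((∑ i : X w, ∑ i' : X e.1.1,
            if (⟨e.1.1, i'⟩ : Σ v, X v) = ⟨w, i⟩ then EUx f y Z hZ μ e i' else 0)
          + ∑ i : X w, ∑ j' : X e.1.2,
            if (⟨e.1.2, j'⟩ : Σ v, X v) = ⟨w, i⟩ then EVx f y Z hZ μ e j' else 0) := by
    unfold DD
    rw [Finset.sum_comm]
    refine Finset.sum_congr rfl fun e _ => ?_
    rw [Finset.sum_add_distrib]
  rw [hswap]
  have hbnd : ∀ e : {e : V × V // e ∈ E},
      ((∑ i : X w, ∑ i' : X e.1.1,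
        if (⟨e.1.1, i'⟩ : Σ v, X v) = ⟨w, i⟩ then EUx f y Z hZ μ e i' else 0)
      + ∑ i : X w, ∑ j' : X e.1.2,
        if (⟨e.1.2, j'⟩ : Σ v, X v) = ⟨w, i⟩ then EVx f y Z hZ μ e j' else 0) ≤ 2 := by
    intro e
    have h1 : (∑ i : X w, ∑ i' : X e.1.1,
        if (⟨e.1.1, i'⟩ : Σ v, X v) = ⟨w, i⟩ then EUx f y Z hZ μ e i' else 0)
        ≤ ∑ i' : X e.1.1, EUx f y Z hZ μ e i' := by
      rw [Finset.sum_comm]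
      refine Finset.sum_le_sum fun i' _ => ?_
      by_cases hw : e.1.1 = w
      · subst hw
        have hcong : ∀ i : X e.1.1, ((⟨e.1.1, i'⟩ : Σ v, X v) = ⟨e.1.1, i⟩) ↔ i' = i := by
          intro i
          rw [Sigma.mk.inj_iff]
          simp
        refine le_of_eq ?_
        rw [Finset.sum_congr rfl fun i _ => if_congr (hcong i) rfl rfl]
        simp
      · refine le_of_eq_of_le (Finset.sum_eq_zero fun i _ => ?_)
          (EUx_nonneg f y Z hZ μ hpos e i')
        rw [if_neg]
        intro hcon
        exact hw (Sigma.mk.inj_iff.mp hcon).1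
    have h2 : (∑ i : X w, ∑ j' : X e.1.2,
        if (⟨e.1.2, j'⟩ : Σ v, X v) = ⟨w, i⟩ then EVx f y Z hZ μ e j' else 0)
        ≤ ∑ j' : X e.1.2, EVx f y Z hZ μ e j' := by
      rw [Finset.sum_comm]
      refine Finset.sum_le_sum fun j' _ => ?_
      by_cases hw : e.1.2 = w
      · subst hw
        have hcong : ∀ i : X e.1.2, ((⟨e.1.2, j'⟩ : Σ v, X v) = ⟨e.1.2, i⟩) ↔ j' = i := by
          intro i
          rw [Sigma.mk.inj_iff]
          simp
        refine le_of_eq ?_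
        rw [Finset.sum_congr rfl fun i _ => if_congr (hcong i) rfl rfl]
        simp
      · refine le_of_eq_of_le (Finset.sum_eq_zero fun i _ => ?_)
          (EVx_nonneg f y Z hZ μ hpos e j')
        rw [if_neg]
        intro hcon
        exact hw (Sigma.mk.inj_iff.mp hcon).1
    have h1' : ∑ i' : X e.1.1, EUx f y Z hZ μ e i' ≤ 1 := by
      rw [sum_EUx]
      calc CMe f y Z μ e ≤ wZm Z μ e.1.2 := CMe_le f y Z μ hμ e
        _ ≤ 1 := wZm_le_one Z μ hμ e.1.2
    have h2' : ∑ j' : X e.1.2, EVx f y Z hZ μ e j' ≤ 1 := by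
      rw [sum_EVx]
      calc RMe f y Z μ e ≤ wZm Z μ e.1.1 := RMe_le f y Z μ hμ e
        _ ≤ 1 := wZm_le_one Z μ hμ e.1.1
    linarith
  calc ∑ e : {e : V × V // e ∈ E}, _ ≤ ∑ e : {e : V × V // e ∈ E}, (2:ℝ) :=
        Finset.sum_le_sum fun e _ => hbnd e
    _ = 2 * (E.card : ℝ) := by
        rw [Finset.sum_const, Finset.card_univ, Fintype.card_coe, nsmul_eq_mul]
        ring

lemma RR_ge (w : V) : (1:ℝ)/2 ≤ RR f y Z hZ μ w := by
  have h1 : tE E * wZm Z μ w ≤ tE E * 1 :=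
    mul_le_mul_of_nonneg_left (wZm_le_one Z μ hμ w) (tE_pos).le
  have h2 : tE E * (∑ i : X w, DD f y Z hZ μ w i) ≤ tE E * (2 * (E.card : ℝ)) :=
    mul_le_mul_of_nonneg_left (sumDD_le f y Z hZ μ hμ w) (tE_pos).le
  have h3 : tE E * (2 * (E.card : ℝ) + 1) ≤ 1/4 := tE_bound
  have h4 : tE E * (2 * (E.card : ℝ)) + tE E * 1 = tE E * (2 * (E.card : ℝ) + 1) := by
    ring
  rw [RR]
  linarith

end CoreLemmas3

section CoreLemmas4

set_option linter.unusedSectionVars false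
set_option maxHeartbeats 1000000

attribute [local instance] Classical.propDecidable

variable (f : GVec X E) (y : ∀ v, X v) (Z : ∀ v, Finset (X v))
  (hZ : ∀ v, y v ∉ Z v) (μ : GVec X E)

lemma sum_nuUn (w : V) : ∑ i : X w, nuUn f y Z hZ μ w i = 1 := by
  have hsplit : ∀ i : X w, nuUn f y Z hZ μ w i
      = (if i ∈ Z w then tE E * μ (uIdx w i) else 0)
        + tE E * DD f y Z hZ μ w i
        + (if i = y w then RR f y Z hZ μ w else 0) := by
    intro i
    by_cases hi : i ∈ Z w
    · rw [nuUn, if_pos hi, if_pos hi, DD_zero f y Z hZ μ w hi,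
        if_neg (show ¬ i = y w from fun h => hZ w (by rw [← h]; exact hi))]
      ring
    · rw [nuUn, if_neg hi, if_neg hi]
      ring
  rw [Finset.sum_congr rfl fun i _ => hsplit i, Finset.sum_add_distrib,
    Finset.sum_add_distrib]
  have hA : (∑ i : X w, if i ∈ Z w then tE E * μ (uIdx w i) else 0)
      = tE E * wZm Z μ w := by
    rw [wZm, Finset.mul_sum]
    refine Finset.sum_congr rfl fun i _ => ?_
    split_ifs <;> ring
  have hC : (∑ i : X w, if i = y w then RR f y Z hZ μ w else 0)
      = RR f y Z hZ μ w := by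
    rw [Finset.sum_ite_eq' Finset.univ (y w) (fun _ => RR f y Z hZ μ w),
      if_pos (Finset.mem_univ _)]
  rw [hA, hC, ← Finset.mul_sum, RR]
  ring

lemma nuUn_Z (w : V) {i : X w} (hi : i ∈ Z w) :
    nuUn f y Z hZ μ w i = tE E * μ (uIdx w i) := by rw [nuUn, if_pos hi]

lemma tote_eq (e : {e : V × V // e ∈ E}) :
    tote f y Z hZ μ e = 1 - tE E * wZm Z μ e.1.1 - tE E * CMe f y Z μ e := by
  have hpt : ∀ i : X e.1.1, (if i ∈ Z e.1.1 then 0 else rowneed f y Z hZ μ e i)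
      = (nuUn f y Z hZ μ e.1.1 i - (if i ∈ Z e.1.1 then tE E * μ (uIdx e.1.1 i) else 0))
        - tE E * EUx f y Z hZ μ e i := by
    intro i
    by_cases hi : i ∈ Z e.1.1
    · rw [if_pos hi, if_pos hi, nuUn_Z f y Z hZ μ e.1.1 hi, EUx, if_pos hi]
      ring
    · rw [if_neg hi, if_neg hi, EUx, if_neg hi, rowneed]
      ring
  rw [tote, Finset.sum_congr rfl fun i _ => hpt i, Finset.sum_sub_distrib,
    Finset.sum_sub_distrib, sum_nuUn]
  have hA : (∑ i : X e.1.1, if i ∈ Z e.1.1 then tE E * μ (uIdx e.1.1 i) else 0)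
      = tE E * wZm Z μ e.1.1 := by
    rw [wZm, Finset.mul_sum]
    refine Finset.sum_congr rfl fun i _ => ?_
    split_ifs <;> ring
  rw [hA, ← Finset.mul_sum, sum_EUx]

lemma coltot_eq (e : {e : V × V // e ∈ E}) :
    (∑ j : X e.1.2, if j ∈ Z e.1.2 then 0 else colneed f y Z hZ μ e j)
      = 1 - tE E * wZm Z μ e.1.2 - tE E * RMe f y Z μ e := by
  have hpt : ∀ j : X e.1.2, (if j ∈ Z e.1.2 then 0 else colneed f y Z hZ μ e j)
      = (nuUn f y Z hZ μ e.1.2 j - (if j ∈ Z e.1.2 then tE E * μ (uIdx e.1.2 j) else 0))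
        - tE E * EVx f y Z hZ μ e j := by
    intro j
    by_cases hj : j ∈ Z e.1.2
    · rw [if_pos hj, if_pos hj, nuUn_Z f y Z hZ μ e.1.2 hj, EVx, if_pos hj]
      ring
    · rw [if_neg hj, if_neg hj, EVx, if_neg hj, colneed]
      ring
  rw [Finset.sum_congr rfl fun j _ => hpt j, Finset.sum_sub_distrib,
    Finset.sum_sub_distrib, sum_nuUn]
  have hA : (∑ j : X e.1.2, if j ∈ Z e.1.2 then tE E * μ (uIdx e.1.2 j) else 0)
      = tE E * wZm Z μ e.1.2 := by
    rw [wZm, Finset.mul_sum]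
    refine Finset.sum_congr rfl fun j _ => ?_
    split_ifs <;> ring
  rw [hA, ← Finset.mul_sum, sum_EVx]

variable (hμ : μ ∈ localPolytope X E)
include hμ

lemma coltot_eq_tote (e : {e : V × V // e ∈ E}) :
    (∑ j : X e.1.2, if j ∈ Z e.1.2 then 0 else colneed f y Z hZ μ e j)
      = tote f y Z hZ μ e := by
  have h := counting_identity f y Z μ hμ e
  have h2 : tE E * (wZm Z μ e.1.1 + CMe f y Z μ e)
      = tE E * (wZm Z μ e.1.2 + RMe f y Z μ e) := by rw [h]
  rw [coltot_eq, tote_eq]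
  ring_nf
  ring_nf at h2
  linarith

lemma tote_ge (e : {e : V × V // e ∈ E}) : (1:ℝ)/2 ≤ tote f y Z hZ μ e := by
  rw [tote_eq]
  have h1 : tE E * wZm Z μ e.1.1 ≤ tE E * 1 :=
    mul_le_mul_of_nonneg_left (wZm_le_one Z μ hμ e.1.1) tE_pos.le
  have h2 : tE E * CMe f y Z μ e ≤ tE E * 1 := by
    refine mul_le_mul_of_nonneg_left ?_ tE_pos.le
    exact le_trans (CMe_le f y Z μ hμ e) (wZm_le_one Z μ hμ e.1.2)
  have h3 : tE E ≤ 1/8 := tE_le_eighth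
  linarith

lemma tote_pos (e : {e : V × V // e ∈ E}) : 0 < tote f y Z hZ μ e :=
  lt_of_lt_of_le (by norm_num) (tote_ge f y Z hZ μ hμ e)

lemma rowneed_nonneg (e : {e : V × V // e ∈ E}) {i : X e.1.1} (hi : i ∉ Z e.1.1) :
    0 ≤ rowneed f y Z hZ μ e i := by
  have hpos := hμ.1
  have h1 : tE E * EUx f y Z hZ μ e i ≤ tE E * DD f y Z hZ μ e.1.1 i :=
    mul_le_mul_of_nonneg_left (DD_ge_EU f y Z hZ μ hpos e i) tE_pos.le
  have h2 : EUx f y Z hZ μ e i = margU f y Z hZ μ e i := by rw [EUx, if_neg hi]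
  have h3 : 0 ≤ (if i = y e.1.1 then RR f y Z hZ μ e.1.1 else 0) := by
    split_ifs
    · linarith [RR_ge f y Z hZ μ hμ e.1.1]
    · exact le_rfl
  rw [rowneed, nuUn, if_neg hi]
  rw [h2] at h1
  linarith

lemma colneed_nonneg (e : {e : V × V // e ∈ E}) {j : X e.1.2} (hj : j ∉ Z e.1.2) :
    0 ≤ colneed f y Z hZ μ e j := by
  have hpos := hμ.1
  have h1 : tE E * EVx f y Z hZ μ e j ≤ tE E * DD f y Z hZ μ e.1.2 j :=
    mul_le_mul_of_nonneg_left (DD_ge_EV f y Z hZ μ hpos e j) tE_pos.le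
  have h2 : EVx f y Z hZ μ e j = margV f y Z hZ μ e j := by rw [EVx, if_neg hj]
  have h3 : 0 ≤ (if j = y e.1.2 then RR f y Z hZ μ e.1.2 else 0) := by
    split_ifs
    · linarith [RR_ge f y Z hZ μ hμ e.1.2]
    · exact le_rfl
  rw [colneed, nuUn, if_neg hj]
  rw [h2] at h1
  linarith

lemma nuUn_nonneg (w : V) (i : X w) : 0 ≤ nuUn f y Z hZ μ w i := by
  have hpos := hμ.1
  rw [nuUn]
  split_ifs with h1 h2
  · exact mul_nonneg tE_pos.le (hpos _)
  · have := RR_ge f y Z hZ μ hμ w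
    have := DD_nonneg f y Z hZ μ hpos w i
    have := tE_pos (E := E)
    nlinarith
  · have := DD_nonneg f y Z hZ μ hpos w i
    have := tE_pos (E := E)
    nlinarith

lemma nuW_row (e : {e : V × V // e ∈ E}) (i : X e.1.1) :
    ∑ j : X e.1.2, nuW f y Z hZ μ (pIdx e i j) = nuUn f y Z hZ μ e.1.1 i := by
  have hm : margU f y Z hZ μ e i = ∑ j : X e.1.2, nonfill f y Z hZ μ e i j := rfl
  by_cases hi : i ∈ Z e.1.1
  · have hpt : ∀ j : X e.1.2, nuW f y Z hZ μ (pIdx e i j)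
        = tE E * nonfill f y Z hZ μ e i j := by
      intro j
      rw [nuW_pw, if_pos (Or.inl hi), add_zero]
    rw [Finset.sum_congr rfl fun j _ => hpt j, ← Finset.mul_sum, ← hm,
      margU_eq_tot f y Z hZ μ e hi, hμ.2.2.2.1 e i, nuUn_Z f y Z hZ μ e.1.1 hi]
  · have hpt : ∀ j : X e.1.2, nuW f y Z hZ μ (pIdx e i j)
        = tE E * nonfill f y Z hZ μ e i j
          + (if j ∈ Z e.1.2 then 0
              else rowneed f y Z hZ μ e i * colneed f y Z hZ μ e j / tote f y Z hZ μ e) := by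
      intro j
      rw [nuW_pw]
      congr 1
      by_cases hj : j ∈ Z e.1.2
      · rw [if_pos (Or.inr hj), if_pos hj]
      · rw [if_neg (by tauto), if_neg hj]
    rw [Finset.sum_congr rfl fun j _ => hpt j, Finset.sum_add_distrib, ← Finset.mul_sum,
      ← hm]
    have hfill : (∑ j : X e.1.2, if j ∈ Z e.1.2 then 0
        else rowneed f y Z hZ μ e i * colneed f y Z hZ μ e j / tote f y Z hZ μ e)
        = rowneed f y Z hZ μ e i := by
      have hpt2 : ∀ j : X e.1.2, (if j ∈ Z e.1.2 then 0
          else rowneed f y Z hZ μ e i * colneed f y Z hZ μ e j / tote f y Z hZ μ e)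
          = rowneed f y Z hZ μ e i
            * (if j ∈ Z e.1.2 then 0 else colneed f y Z hZ μ e j) / tote f y Z hZ μ e := by
        intro j
        split_ifs <;> ring
      rw [Finset.sum_congr rfl fun j _ => hpt2 j, ← Finset.sum_div, ← Finset.mul_sum,
        coltot_eq_tote f y Z hZ μ hμ e,
        mul_div_assoc, div_self (tote_pos f y Z hZ μ hμ e).ne', mul_one]
    rw [hfill, rowneed]
    ring

lemma nuW_col (e : {e : V × V // e ∈ E}) (j : X e.1.2) :
    ∑ i : X e.1.1, nuW f y Z hZ μ (pIdx e i j) = nuUn f y Z hZ μ e.1.2 j := by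
  have hm : margV f y Z hZ μ e j = ∑ i : X e.1.1, nonfill f y Z hZ μ e i j := rfl
  by_cases hj : j ∈ Z e.1.2
  · have hpt : ∀ i : X e.1.1, nuW f y Z hZ μ (pIdx e i j)
        = tE E * nonfill f y Z hZ μ e i j := by
      intro i
      rw [nuW_pw, if_pos (Or.inr hj), add_zero]
    rw [Finset.sum_congr rfl fun i _ => hpt i, ← Finset.mul_sum, ← hm,
      margV_eq_tot f y Z hZ μ e hj, hμ.2.2.2.2 e j, nuUn_Z f y Z hZ μ e.1.2 hj]
  · have hpt : ∀ i : X e.1.1, nuW f y Z hZ μ (pIdx e i j)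
        = tE E * nonfill f y Z hZ μ e i j
          + (if i ∈ Z e.1.1 then 0
              else rowneed f y Z hZ μ e i * colneed f y Z hZ μ e j / tote f y Z hZ μ e) := by
      intro i
      rw [nuW_pw]
      congr 1
      by_cases hi : i ∈ Z e.1.1
      · rw [if_pos (Or.inl hi), if_pos hi]
      · rw [if_neg (by tauto), if_neg hi]
    rw [Finset.sum_congr rfl fun i _ => hpt i, Finset.sum_add_distrib, ← Finset.mul_sum,
      ← hm]
    have hfill : (∑ i : X e.1.1, if i ∈ Z e.1.1 then 0
        else rowneed f y Z hZ μ e i * colneed f y Z hZ μ e j / tote f y Z hZ μ e)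
        = colneed f y Z hZ μ e j := by
      have hpt2 : ∀ i : X e.1.1, (if i ∈ Z e.1.1 then 0
          else rowneed f y Z hZ μ e i * colneed f y Z hZ μ e j / tote f y Z hZ μ e)
          = (if i ∈ Z e.1.1 then 0 else rowneed f y Z hZ μ e i)
            * colneed f y Z hZ μ e j / tote f y Z hZ μ e := by
        intro i
        split_ifs <;> ring
      rw [Finset.sum_congr rfl fun i _ => hpt2 i, ← Finset.sum_div, ← Finset.sum_mul]
      have : (∑ i : X e.1.1, if i ∈ Z e.1.1 then 0 else rowneed f y Z hZ μ e i)
          = tote f y Z hZ μ e := rfl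
      rw [this]
      rw [mul_comm, mul_div_assoc, div_self (tote_pos f y Z hZ μ hμ e).ne', mul_one]
    rw [hfill, colneed]
    ring

lemma nuW_mem : nuW f y Z hZ μ ∈ localPolytope X E := by
  have hpos := hμ.1
  refine ⟨?_, rfl, ?_, ?_, ?_⟩
  · intro idx
    match idx with
    | Sum.inl _ => exact zero_le_one
    | Sum.inr (Sum.inl ⟨w, i⟩) => exact nuUn_nonneg f y Z hZ μ hμ w i
    | Sum.inr (Sum.inr ⟨e, (i, j)⟩) =>
      refine add_nonneg (mul_nonneg tE_pos.le (nonfill_nonneg f y Z hZ μ hpos e i j)) ?_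
      split_ifs with h
      · exact le_rfl
      · push_neg at h
        exact div_nonneg (mul_nonneg (rowneed_nonneg f y Z hZ μ hμ e h.1)
          (colneed_nonneg f y Z hZ μ hμ e h.2)) (tote_pos f y Z hZ μ hμ e).le
  · intro w
    exact sum_nuUn f y Z hZ μ w
  · intro e i
    exact nuW_row f y Z hZ μ hμ e i
  · intro e j
    exact nuW_col f y Z hZ μ hμ e j

end CoreLemmas4

section CoreCost

set_option linter.unusedSectionVars false
set_option maxHeartbeats 1000000

attribute [local instance] Classical.propDecidable

variable (f : GVec X E) (y : ∀ v, X v) (Z : ∀ v, Finset (X v))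
  (hZ : ∀ v, y v ∉ Z v) (μ : GVec X E)

/-- Row-type cost contributions. -/
def Hrow (e : {e : V × V // e ∈ E}) (i : X e.1.1) (j : X e.1.2) : ℝ :=
  if i ∈ Z e.1.1 then
    (if j ∈ Z e.1.2 then
      (if btype f y Z e i j then duv f y Z e i * μ (pIdx e i j)
        else gvec f y Z (pIdx e i j) * μ (pIdx e i j))
    else duv f y Z e i * μ (pIdx e i j))
  else 0

/-- Column-type cost contributions. -/
def Hcol (e : {e : V × V // e ∈ E}) (i : X e.1.1) (j : X e.1.2) : ℝ :=
  if j ∈ Z e.1.2 then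
    (if i ∈ Z e.1.1 then
      (if btype f y Z e i j then dvu f y Z e j * μ (pIdx e i j) else 0)
    else dvu f y Z e j * μ (pIdx e i j))
  else 0

lemma red_mul_eq (e : {e : V × V // e ∈ E}) (i : X e.1.1) (j : X e.1.2) :
    reduced f y Z (pIdx e i j) * μ (pIdx e i j)
      = Hrow f y Z μ e i j + Hcol f y Z μ e i j := by
  rw [reduced_pw, min_def]
  unfold Hrow Hcol btype
  split_ifs <;> ring

lemma row_cost (e : {e : V × V // e ∈ E}) {i : X e.1.1} (hi : i ∈ Z e.1.1) :
    (∑ j : X e.1.2, gvec f y Z (pIdx e i j) * nonfill f y Z hZ μ e i j)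
      = ∑ j : X e.1.2, Hrow f y Z μ e i j := by
  have hL : ∀ j : X e.1.2, gvec f y Z (pIdx e i j) * nonfill f y Z hZ μ e i j
      = (if j ∈ Z e.1.2 then
          (if btype f y Z e i j then 0 else gvec f y Z (pIdx e i j) * μ (pIdx e i j))
         else 0)
        + (if j ∈ Z e.1.2 then 0 else
            (if j = jstar f y Z hZ e i then
              gvec f y Z (pIdx e i j) * rowmass f y Z μ e i else 0)) := by
    intro j
    unfold nonfill
    rw [if_pos hi]
    split_ifs <;> ring
  have hR : ∀ j : X e.1.2, Hrow f y Z μ e i j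
      = (if j ∈ Z e.1.2 then
          (if btype f y Z e i j then 0 else gvec f y Z (pIdx e i j) * μ (pIdx e i j))
         else 0)
        + (if j ∈ Z e.1.2 then
            (if btype f y Z e i j then duv f y Z e i * μ (pIdx e i j) else 0)
           else duv f y Z e i * μ (pIdx e i j)) := by
    intro j
    unfold Hrow
    rw [if_pos hi]
    split_ifs <;> ring
  rw [Finset.sum_congr rfl fun j _ => hL j, Finset.sum_congr rfl fun j _ => hR j,
    Finset.sum_add_distrib, Finset.sum_add_distrib]
  congr 1
  have hQ : (∑ j : X e.1.2, if j ∈ Z e.1.2 then 0 else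
      (if j = jstar f y Z hZ e i then
        gvec f y Z (pIdx e i j) * rowmass f y Z μ e i else 0))
      = duv f y Z e i * rowmass f y Z μ e i := by
    have hpt : ∀ j : X e.1.2, (if j ∈ Z e.1.2 then 0 else
        (if j = jstar f y Z hZ e i then
          gvec f y Z (pIdx e i j) * rowmass f y Z μ e i else 0))
        = (if j = jstar f y Z hZ e i then
            gvec f y Z (pIdx e i j) * rowmass f y Z μ e i else 0) := by
      intro j
      by_cases hj : j ∈ Z e.1.2
      · rw [if_pos hj,
          if_neg (show ¬ j = jstar f y Z hZ e i from
            fun h => (jstar_spec f y Z hZ e i).1 (by rw [← h]; exact hj))]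
      · rw [if_neg hj]
    rw [Finset.sum_congr rfl fun j _ => hpt j,
      Finset.sum_ite_eq' Finset.univ (jstar f y Z hZ e i)
        (fun j => gvec f y Z (pIdx e i j) * rowmass f y Z μ e i),
      if_pos (Finset.mem_univ _), gq_jstar]
  have hRR : (∑ j : X e.1.2, if j ∈ Z e.1.2 then
      (if btype f y Z e i j then duv f y Z e i * μ (pIdx e i j) else 0)
      else duv f y Z e i * μ (pIdx e i j))
      = duv f y Z e i * rowmass f y Z μ e i := by
    rw [rowmass, Finset.mul_sum]
    refine Finset.sum_congr rfl fun j _ => ?_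
    split_ifs <;> ring
  rw [hQ, hRR]

lemma edge_cost (e : {e : V × V // e ∈ E}) :
    (∑ i : X e.1.1, ∑ j : X e.1.2,
      gvec f y Z (pIdx e i j) * nonfill f y Z hZ μ e i j)
      = ∑ i : X e.1.1, ∑ j : X e.1.2,
          reduced f y Z (pIdx e i j) * μ (pIdx e i j) := by
  have hsplit : ∀ i : X e.1.1,
      (∑ j : X e.1.2, gvec f y Z (pIdx e i j) * nonfill f y Z hZ μ e i j)
      = (if i ∈ Z e.1.1 then
          ∑ j : X e.1.2, gvec f y Z (pIdx e i j) * nonfill f y Z hZ μ e i j else 0)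
        + (if i ∈ Z e.1.1 then 0 else
            ∑ j : X e.1.2, gvec f y Z (pIdx e i j) * nonfill f y Z hZ μ e i j) := by
    intro i
    split_ifs <;> ring
  rw [Finset.sum_congr rfl fun i _ => hsplit i, Finset.sum_add_distrib]
  have hT1 : (∑ i : X e.1.1, if i ∈ Z e.1.1 then
      (∑ j : X e.1.2, gvec f y Z (pIdx e i j) * nonfill f y Z hZ μ e i j) else 0)
      = ∑ i : X e.1.1, ∑ j : X e.1.2, Hrow f y Z μ e i j := by
    refine Finset.sum_congr rfl fun i _ => ?_
    by_cases hi : i ∈ Z e.1.1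
    · rw [if_pos hi, row_cost f y Z hZ μ e hi]
    · rw [if_neg hi]
      refine (Finset.sum_eq_zero fun j _ => ?_).symm
      unfold Hrow
      rw [if_neg hi]
  have hT2 : (∑ i : X e.1.1, if i ∈ Z e.1.1 then 0 else
      ∑ j : X e.1.2, gvec f y Z (pIdx e i j) * nonfill f y Z hZ μ e i j)
      = ∑ j : X e.1.2, (if j ∈ Z e.1.2 then
          dvu f y Z e j * colmass f y Z μ e j else 0) := by
    have hpt : ∀ i : X e.1.1, (if i ∈ Z e.1.1 then 0 else
        ∑ j : X e.1.2, gvec f y Z (pIdx e i j) * nonfill f y Z hZ μ e i j)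
        = ∑ j : X e.1.2, (if i ∈ Z e.1.1 then 0 else
            (if j ∈ Z e.1.2 then
              (if i = istar f y Z hZ e j then
                gvec f y Z (pIdx e i j) * colmass f y Z μ e j else 0) else 0)) := by
      intro i
      by_cases hi : i ∈ Z e.1.1
      · rw [if_pos hi]
        refine (Finset.sum_eq_zero fun j _ => ?_).symm
        rw [if_pos hi]
      · rw [if_neg hi]
        refine Finset.sum_congr rfl fun j _ => ?_
        rw [if_neg hi]
        unfold nonfill
        rw [if_neg hi]
        split_ifs <;> ring
    rw [Finset.sum_congr rfl fun i _ => hpt i, Finset.sum_comm]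
    refine Finset.sum_congr rfl fun j _ => ?_
    by_cases hj : j ∈ Z e.1.2
    · rw [if_pos hj]
      have hpt2 : ∀ i : X e.1.1, (if i ∈ Z e.1.1 then 0 else
          (if j ∈ Z e.1.2 then
            (if i = istar f y Z hZ e j then
              gvec f y Z (pIdx e i j) * colmass f y Z μ e j else 0) else 0))
          = (if i = istar f y Z hZ e j then
              gvec f y Z (pIdx e i j) * colmass f y Z μ e j else 0) := by
        intro i
        by_cases hi : i ∈ Z e.1.1
        · rw [if_pos hi,
            if_neg (show ¬ i = istar f y Z hZ e j from
              fun h => (istar_spec f y Z hZ e j).1 (by rw [← h]; exact hi))]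
        · rw [if_neg hi, if_pos hj]
      rw [Finset.sum_congr rfl fun i _ => hpt2 i,
        Finset.sum_ite_eq' Finset.univ (istar f y Z hZ e j)
          (fun i => gvec f y Z (pIdx e i j) * colmass f y Z μ e j),
        if_pos (Finset.mem_univ _), gq_istar]
    · rw [if_neg hj]
      refine Finset.sum_eq_zero fun i _ => ?_
      by_cases hi : i ∈ Z e.1.1
      · rw [if_pos hi]
      · rw [if_neg hi, if_neg hj]
  have hT2b : (∑ i : X e.1.1, ∑ j : X e.1.2, Hcol f y Z μ e i j)
      = ∑ j : X e.1.2, (if j ∈ Z e.1.2 then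
          dvu f y Z e j * colmass f y Z μ e j else 0) := by
    rw [Finset.sum_comm]
    refine Finset.sum_congr rfl fun j _ => ?_
    by_cases hj : j ∈ Z e.1.2
    · rw [if_pos hj]
      have hpt : ∀ i : X e.1.1, Hcol f y Z μ e i j
          = dvu f y Z e j * (if i ∈ Z e.1.1 then
              (if btype f y Z e i j then μ (pIdx e i j) else 0) else μ (pIdx e i j)) := by
        intro i
        unfold Hcol
        rw [if_pos hj]
        split_ifs <;> ring
      calc (∑ i : X e.1.1, Hcol f y Z μ e i j)
          = ∑ i : X e.1.1, dvu f y Z e j * (if i ∈ Z e.1.1 then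
              (if btype f y Z e i j then μ (pIdx e i j) else 0) else μ (pIdx e i j)) :=
            Finset.sum_congr rfl fun i _ => hpt i
        _ = dvu f y Z e j * ∑ i : X e.1.1, (if i ∈ Z e.1.1 then
              (if btype f y Z e i j then μ (pIdx e i j) else 0) else μ (pIdx e i j)) := by
            rw [Finset.mul_sum]
        _ = dvu f y Z e j * colmass f y Z μ e j := rfl
    · rw [if_neg hj]
      refine Finset.sum_eq_zero fun i _ => ?_
      unfold Hcol
      rw [if_neg hj]
  rw [hT1, hT2, ← hT2b,
    Finset.sum_congr rfl fun i _ =>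
      (Finset.sum_congr rfl fun j _ => (red_mul_eq f y Z μ e i j)),
    ← Finset.sum_add_distrib]
  refine Finset.sum_congr rfl fun i _ => ?_
  rw [← Finset.sum_add_distrib]

/-- The cost of the witness: `⟨g^q, ν⟩ = t ⟨ḡ^Z, μ⟩`. -/
lemma dotp_nuW :
    dotp (gvec f y Z) (nuW f y Z hZ μ) = tE E * dotp (reduced f y Z) μ := by
  rw [dotp_expand, dotp_expand]
  have hcst : gvec f y Z cIdx * nuW f y Z hZ μ cIdx
      = tE E * (reduced f y Z cIdx * μ cIdx) := by
    rw [gvec_c, reduced_c]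
    ring
  have hun : ∀ (w : V) (i : X w),
      gvec f y Z (uIdx w i) * nuW f y Z hZ μ (uIdx w i)
      = tE E * (reduced f y Z (uIdx w i) * μ (uIdx w i)) := by
    intro w i
    rw [nuW_un, reduced_un]
    by_cases hi : i ∈ Z w
    · rw [nuUn_Z f y Z hZ μ w hi]
      ring
    · rw [gvec_un_nmem f y Z hi]
      ring
  have hpw : ∀ e : {e : V × V // e ∈ E},
      (∑ i : X e.1.1, ∑ j : X e.1.2,
        gvec f y Z (pIdx e i j) * nuW f y Z hZ μ (pIdx e i j))
      = tE E * ∑ i : X e.1.1, ∑ j : X e.1.2,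
          reduced f y Z (pIdx e i j) * μ (pIdx e i j) := by
    intro e
    have step0 : ∀ (i : X e.1.1) (j : X e.1.2),
        gvec f y Z (pIdx e i j) * nuW f y Z hZ μ (pIdx e i j)
        = tE E * (gvec f y Z (pIdx e i j) * nonfill f y Z hZ μ e i j) := by
      intro i j
      rw [nuW_pw]
      by_cases h : i ∈ Z e.1.1 ∨ j ∈ Z e.1.2
      · rw [if_pos h]
        ring
      · push_neg at h
        rw [gvec_pw_nmem f y Z h.1 h.2]
        ring
    rw [Finset.sum_congr rfl fun i _ => Finset.sum_congr rfl fun j _ => step0 i j]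
    have : (∑ i : X e.1.1, ∑ j : X e.1.2,
        tE E * (gvec f y Z (pIdx e i j) * nonfill f y Z hZ μ e i j))
        = tE E * ∑ i : X e.1.1, ∑ j : X e.1.2,
            gvec f y Z (pIdx e i j) * nonfill f y Z hZ μ e i j := by
      rw [Finset.mul_sum]
      exact Finset.sum_congr rfl fun i _ => (Finset.mul_sum _ _ _).symm
    rw [this, edge_cost f y Z hZ μ e]
  rw [hcst, Finset.sum_congr rfl fun w _ => Finset.sum_congr rfl fun i _ => hun w i,
    Finset.sum_congr rfl fun e _ => hpw e]
  have h2 : (∑ w : V, ∑ i : X w, tE E * (reduced f y Z (uIdx w i) * μ (uIdx w i)))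
      = tE E * ∑ w : V, ∑ i : X w, reduced f y Z (uIdx w i) * μ (uIdx w i) := by
    rw [Finset.mul_sum]
    exact Finset.sum_congr rfl fun w _ => (Finset.mul_sum _ _ _).symm
  have h3 : (∑ e : {e : V × V // e ∈ E}, tE E * ∑ i : X e.1.1, ∑ j : X e.1.2,
      reduced f y Z (pIdx e i j) * μ (pIdx e i j))
      = tE E * ∑ e : {e : V × V // e ∈ E}, ∑ i : X e.1.1, ∑ j : X e.1.2,
          reduced f y Z (pIdx e i j) * μ (pIdx e i j) :=
    (Finset.mul_sum _ _ _).symm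
  rw [h2, h3]
  ring

end CoreCost

section Core

set_option linter.unusedSectionVars false

variable (f : GVec X E) (y : ∀ v, X v) (Z : ∀ v, Finset (X v))

/-- The core reduction lemma: if `q = subToOne y Z` is strictly `Λ`-improving for
`f`, then the reduced cost `ḡ^Z` is nonnegative on `Λ` and vanishes only on
`[q]`-fixed points. -/
lemma core (hZ : ∀ v, y v ∉ Z v)
    (hq0 : ∀ μ' ∈ localPolytope X E, 0 ≤ dotp (gvec f y Z) μ')
    (hqfix : ∀ μ' ∈ localPolytope X E, dotp (gvec f y Z) μ' = 0 →
      Pmap (subToOne y Z) μ' = μ')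
    (μ : GVec X E) (hμ : μ ∈ localPolytope X E) :
    0 ≤ dotp (reduced f y Z) μ ∧
      (dotp (reduced f y Z) μ = 0 → Pmap (subToOne y Z) μ = μ) := by
  have hpos := hμ.1
  have hν := nuW_mem f y Z hZ μ hμ
  have hcost := dotp_nuW f y Z hZ μ
  have h0 : 0 ≤ tE E * dotp (reduced f y Z) μ := hcost ▸ hq0 _ hν
  have htpos : (0:ℝ) < tE E := tE_pos
  have hge : 0 ≤ dotp (reduced f y Z) μ := by nlinarith
  refine ⟨hge, ?_⟩
  intro hzero
  have hfixν : Pmap (subToOne y Z) (nuW f y Z hZ μ) = nuW f y Z hZ μ := by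
    refine hqfix _ hν ?_
    rw [hcost, hzero, mul_zero]
  have hzun : ∀ (w : V), ∀ i ∈ Z w, μ (uIdx w i) = 0 := by
    intro w i hi
    have h1 : Pmap (subToOne y Z) (nuW f y Z hZ μ) (uIdx w i)
        = nuW f y Z hZ μ (uIdx w i) := by rw [hfixν]
    rw [Pmap_un, nuW_un, nuUn_Z f y Z hZ μ w hi] at h1
    have h2 : (∑ i' : X w, if subToOne y Z w i' = i
        then nuW f y Z hZ μ (uIdx w i') else 0) = 0 := by
      refine Finset.sum_eq_zero fun i' _ => ?_
      rw [if_neg]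
      exact fun hcon => subToOne_out y Z hZ w i' (by rw [hcon]; exact hi)
    rw [h2] at h1
    exact ((mul_eq_zero.mp h1.symm).resolve_left htpos.ne').symm ▸ rfl
  have hzpw : ∀ (e : {e : V × V // e ∈ E}) (i : X e.1.1) (j : X e.1.2),
      i ∈ Z e.1.1 ∨ j ∈ Z e.1.2 → μ (pIdx e i j) = 0 := by
    intro e i j hij
    rcases hij with hi | hj
    · have hs : ∑ j' : X e.1.2, μ (pIdx e i j') = 0 := by
        rw [hμ.2.2.2.1 e i, hzun e.1.1 i hi]
      exact (Finset.sum_eq_zero_iff_of_nonneg (fun j' _ => hpos _)).mp hs j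
        (Finset.mem_univ j)
    · have hs : ∑ i' : X e.1.1, μ (pIdx e i' j) = 0 := by
        rw [hμ.2.2.2.2 e j, hzun e.1.2 j hj]
      exact (Finset.sum_eq_zero_iff_of_nonneg (fun i' _ => hpos _)).mp hs i
        (Finset.mem_univ i)
  funext idx
  rcases idx with u | vi | ep
  · rfl
  · rcases vi with ⟨w, i⟩
    show (∑ i' : X w, if subToOne y Z w i' = i then μ (uIdx w i') else 0)
      = μ (uIdx w i)
    have hpt : ∀ i' : X w, (if subToOne y Z w i' = i then μ (uIdx w i') else 0)
        = (if i' = i then μ (uIdx w i') else 0) := by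
      intro i'
      by_cases hz : i' ∈ Z w
      · rw [hzun w i' hz]
        simp
      · rw [subToOne_nmem y Z hz]
    rw [Finset.sum_congr rfl fun i' _ => hpt i',
      Finset.sum_ite_eq' Finset.univ i (fun i' => μ (uIdx w i')),
      if_pos (Finset.mem_univ _)]
  · rcases ep with ⟨e, i, j⟩
    show (∑ i' : X e.1.1, ∑ j' : X e.1.2,
        if subToOne y Z e.1.1 i' = i ∧ subToOne y Z e.1.2 j' = j
        then μ (pIdx e i' j') else 0) = μ (pIdx e i j)
    have hpt : ∀ (i' : X e.1.1) (j' : X e.1.2),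
        (if subToOne y Z e.1.1 i' = i ∧ subToOne y Z e.1.2 j' = j
          then μ (pIdx e i' j') else 0)
        = (if i' = i ∧ j' = j then μ (pIdx e i' j') else 0) := by
      intro i' j'
      by_cases hz : i' ∈ Z e.1.1
      · rw [hzpw e i' j' (Or.inl hz)]
        simp
      · by_cases hz2 : j' ∈ Z e.1.2
        · rw [hzpw e i' j' (Or.inr hz2)]
          simp
        · rw [subToOne_nmem y Z hz, subToOne_nmem y Z hz2]
    have hrow : ∀ i' : X e.1.1,
        (∑ j' : X e.1.2, if i' = i ∧ j' = j then μ (pIdx e i' j') else 0)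
        = (if i' = i then μ (pIdx e i' j) else 0) := by
      intro i'
      by_cases h : i' = i
      · rw [if_pos h]
        have : ∀ j' : X e.1.2, (if i' = i ∧ j' = j then μ (pIdx e i' j') else 0)
            = (if j' = j then μ (pIdx e i' j') else 0) := by
          intro j'
          by_cases h2 : j' = j
          · rw [if_pos h2, if_pos ⟨h, h2⟩]
          · rw [if_neg h2, if_neg (fun hc => h2 hc.2)]
        rw [Finset.sum_congr rfl fun j' _ => this j',
          Finset.sum_ite_eq' Finset.univ j (fun j' => μ (pIdx e i' j')),
          if_pos (Finset.mem_univ _)]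
      · rw [if_neg h]
        exact Finset.sum_eq_zero fun j' _ => if_neg (fun hc => h hc.1)
    rw [Finset.sum_congr rfl fun i' _ =>
        Finset.sum_congr rfl fun j' _ => hpt i' j',
      Finset.sum_congr rfl fun i' _ => hrow i',
      Finset.sum_ite_eq' Finset.univ i (fun i' => μ (pIdx e i' j)),
      if_pos (Finset.mem_univ _)]


end Core


theorem restricted_minimizers_support_fixed
    [∀ v, Nonempty (X v)]
    (f : GVec X E) (y : ∀ v, X v) (Y : ∀ v, Finset (X v)) (hY : ∀ v, y v ∉ Y v)
    (q : ∀ v, X v → X v) (hq : InPtwo y q)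
    (hqS : StrictlyLambdaImproving (localPolytope X E) f q)
    (hle : ∀ v : V, Set.range (subToOne y Y v) ⊆ Set.range (q v))
    (Λ' : Set (GVec X E)) (hsub : Λ' ⊆ localPolytope X E)
    (hne : Λ'.Nonempty) (hcomp : IsCompact Λ')
    (hQ : ∀ μ ∈ Λ', Pmap q μ ∈ Λ') :
    ∀ v : V,
      (fun i => q v i) ''
          {i : X v | ∃ μ, (μ ∈ Λ' ∧
            ∀ μ' ∈ Λ', dotp (reduced f y Y) μ ≤ dotp (reduced f y Y) μ') ∧
            0 < μ (uIdx v i)} =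
        {i : X v | ∃ μ, (μ ∈ Λ' ∧
          ∀ μ' ∈ Λ', dotp (reduced f y Y) μ ≤ dotp (reduced f y Y) μ') ∧
          0 < μ (uIdx v i)} := by
  classical
  obtain ⟨Z, hZ, hqdef⟩ := hq
  have hqe : q = subToOne y Z := funext fun v => funext fun i => hqdef v i
  subst hqe
  have hZY : ∀ v, Z v ⊆ Y v := by
    intro v i hiZ
    by_contra hiY
    obtain ⟨i', hi'⟩ := hle v ⟨i, subToOne_nmem y Y hiY⟩
    by_cases h : i' ∈ Z v
    · rw [subToOne_mem y Z h] at hi'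
      exact hZ v (hi' ▸ hiZ)
    · rw [subToOne_nmem y Z h] at hi'
      exact h (hi' ▸ hiZ)
  have hq0 : ∀ μ' ∈ localPolytope X E, 0 ≤ dotp (gvec f y Z) μ' :=
    fun μ' hμ' => hqS.1.2 ⟨μ', hμ', rfl⟩
  have hqfix : ∀ μ' ∈ localPolytope X E, dotp (gvec f y Z) μ' = 0 →
      Pmap (subToOne y Z) μ' = μ' := hqS.2
  have key : ∀ μ, μ ∈ Λ' →
      (∀ μ' ∈ Λ', dotp (reduced f y Y) μ ≤ dotp (reduced f y Y) μ') →
      Pmap (subToOne y Z) μ = μ := by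
    intro μ hμ hmin
    have hμΛ := hsub hμ
    have h1 := dotp_red_le f y Y Z hY hZY μ hμΛ.1
    have h2 : dotp (reduced f y Y) μ ≤ dotp (reduced f y Y) (Pmap (subToOne y Z) μ) :=
      hmin _ (hQ μ hμ)
    obtain ⟨hge, hfix⟩ := core f y Z hZ hq0 hqfix μ hμΛ
    exact hfix (le_antisymm (by linarith) hge)
  intro v
  ext i
  simp only [Set.mem_image, Set.mem_setOf_eq]
  constructor
  · rintro ⟨i0, ⟨μ, ⟨hμ, hmin⟩, hpos⟩, rfl⟩
    refine ⟨μ, ⟨hμ, hmin⟩, ?_⟩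
    have hfix := key μ hμ hmin
    have hval : μ (uIdx v (subToOne y Z v i0))
        = ∑ i' : X v, if subToOne y Z v i' = subToOne y Z v i0
            then μ (uIdx v i') else 0 := by
      conv_lhs => rw [← hfix]
      rfl
    rw [hval]
    have hnn : ∀ i' ∈ (Finset.univ : Finset (X v)),
        0 ≤ (if subToOne y Z v i' = subToOne y Z v i0 then μ (uIdx v i') else 0) := by
      intro i' _
      split_ifs
      · exact (hsub hμ).1 (uIdx v i')
      · exact le_refl 0
    calc (0:ℝ) < μ (uIdx v i0) := hpos
      _ = (if subToOne y Z v i0 = subToOne y Z v i0 then μ (uIdx v i0) else 0) :=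
        (if_pos rfl).symm
      _ ≤ _ := Finset.single_le_sum hnn (Finset.mem_univ i0)
  · rintro ⟨μ, ⟨hμ, hmin⟩, hpos⟩
    have hfix := key μ hμ hmin
    have hval : (∑ i' : X v, if subToOne y Z v i' = i then μ (uIdx v i') else 0)
        = μ (uIdx v i) := by
      conv_rhs => rw [← hfix]
      rfl
    have hex : ∃ i', subToOne y Z v i' = i ∧ 0 < μ (uIdx v i') := by
      by_contra hno
      push_neg at hno
      have hzero : (∑ i' : X v, if subToOne y Z v i' = i then μ (uIdx v i') else 0) = 0 := by
        refine Finset.sum_eq_zero fun i' _ => ?_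
        by_cases h : subToOne y Z v i' = i
        · rw [if_pos h]
          exact le_antisymm (hno i' h) ((hsub hμ).1 (uIdx v i'))
        · rw [if_neg h]
      rw [hzero] at hval
      exact absurd hval.symm (ne_of_gt hpos)
    obtain ⟨i', hqi', hpos'⟩ := hex
    exact ⟨i', ⟨μ, ⟨hμ, hmin⟩, hpos'⟩, hqi'⟩


end
end

section
/- Fix a test labeling y ∈ X. If p, q ∈ P^{2,y} are both strictly improving for the cost vector f, then the composition r defined by r(x) = p(q(x)) belongs to P^{2,y}, is strictly improving for f, and satisfies r_u(X_u) = p_u(X_u) ∩ q_u(X_u) for every u ∈ V. -/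
open Finset

noncomputable section

variable {V : Type*} [Fintype V] [DecidableEq V]
variable {X : V → Type*} [∀ v, Fintype (X v)] [∀ v, DecidableEq (X v)]
variable {E : Finset (V × V)}

lemma range_ite_sub {α : Type*} [DecidableEq α] (y : α) (Y : Finset α) (hy : y ∉ Y)
    (m : α → α) (hm : ∀ i, m i = if i ∈ Y then y else i) :
    Set.range m = {i | i ∉ Y} := by
  ext i
  constructor
  · rintro ⟨j, rfl⟩
    rw [hm]
    split
    · exact hy
    · assumption
  · intro hi
    exact ⟨i, by rw [hm, if_neg hi]⟩

theorem composition_of_strictly_improving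
    [∀ v, Nonempty (X v)]
    (f : GVec X E) (y : ∀ v, X v)
    (p q : ∀ v, X v → X v) (hp : InPtwo y p) (hq : InPtwo y q)
    (hpS : StrictlyImproving f p) (hqS : StrictlyImproving f q) :
    InPtwo y (fun v i => p v (q v i)) ∧
      StrictlyImproving f (fun v i => p v (q v i)) ∧
      ∀ u : V, Set.range (fun i => p u (q u i)) = Set.range (p u) ∩ Set.range (q u) := by
  obtain ⟨Yp, hyp, hpd⟩ := hp
  obtain ⟨Yq, hyq, hqd⟩ := hq
  have hrd : ∀ (v : V) (i : X v), p v (q v i) = if i ∈ Yp v ∪ Yq v then y v else i := by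
    intro v i
    rw [hqd]
    by_cases hi : i ∈ Yq v
    · simp only [hi, if_pos, hpd]
      simp [Finset.mem_union, hi]
    · simp only [hi, if_neg, hpd, not_false_iff, if_false]
      simp [Finset.mem_union, hi]
  refine ⟨⟨fun v => Yp v ∪ Yq v, fun v => by simp [hyp v, hyq v], hrd⟩, ?_, ?_⟩
  · intro x hne
    have hcomp : applySub (fun v i => p v (q v i)) x = applySub p (applySub q x) := rfl
    rw [hcomp] at hne ⊢
    by_cases h : applySub q x = x
    · rw [h] at hne ⊢
      exact hpS x hne
    · have h1 := hqS x h
      by_cases h2 : applySub p (applySub q x) = applySub q x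
      · rw [h2]; exact h1
      · exact lt_trans (hpS _ h2) h1
  · intro u
    rw [range_ite_sub (y u) (Yp u) (hyp u) (p u) (hpd u),
        range_ite_sub (y u) (Yq u) (hyq u) (q u) (hqd u),
        range_ite_sub (y u) (Yp u ∪ Yq u) (by simp [hyp u, hyq u])
          (fun i => p u (q u i)) (hrd u)]
    ext i
    simp [Finset.mem_union, not_or]

end
end

section
/- Fix a test labeling y ∈ X, let p ∈ P^{2,y} be defined by sets Y_v ⊆ X_v \ {y_v}, and let ḡ be the reduced cost vector for p. Then ḡ is partially submodular: for every uv ∈ E and all i ∈ Y_u, j ∈ Y_v, i' ∈ X_u \ Y_u, j' ∈ X_v \ Y_v, one has ḡ_{uv}(i,j') + ḡ_{uv}(i',j) − ḡ_{uv}(i,j) − ḡ_{uv}(i',j') ≥ 0. -/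
open Finset

noncomputable section

variable {V : Type*} [Fintype V] [DecidableEq V]
variable {X : V → Type*} [∀ v, Fintype (X v)] [∀ v, DecidableEq (X v)]
variable {E : Finset (V × V)}

theorem reduced_cost_partially_submodular
    [∀ v, Nonempty (X v)]
    (f : GVec X E) (y : ∀ v, X v) (Y : ∀ v, Finset (X v)) (hY : ∀ v, y v ∉ Y v) :
    ∀ (e : {e : V × V // e ∈ E}) (i i' : X e.1.1) (j j' : X e.1.2),
      i ∈ Y e.1.1 → j ∈ Y e.1.2 → i' ∉ Y e.1.1 → j' ∉ Y e.1.2 →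
      0 ≤ reduced f y Y (pIdx e i j') + reduced f y Y (pIdx e i' j) -
        reduced f y Y (pIdx e i j) - reduced f y Y (pIdx e i' j') := by
  intro e i i' j j' hi hj hi' hj'
  simp only [reduced, pIdx, if_pos hi, if_pos hj, if_neg hi', if_neg hj']
  have := min_le_left
    (sInf ((fun i'' => (f - Padj (subToOne y Y) f) (pIdx e i'' j)) '' {i'' : X e.1.1 | i'' ∉ Y e.1.1}) +
     sInf ((fun j'' => (f - Padj (subToOne y Y) f) (pIdx e i j'')) '' {j'' : X e.1.2 | j'' ∉ Y e.1.2}))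
    ((f - Padj (subToOne y Y) f) (pIdx e i j))
  simp only [pIdx] at this
  linarith

end
end

section
/- Fix a test labeling y ∈ X and let Λ be the local polytope. Let p ∈ P^{2,y} be defined by sets Y_v ⊆ X_v \ {y_v} and let ḡ be the reduced cost vector for p. Suppose u ∈ V and i ∈ Y_u satisfy ḡ_u(i) + Σ_{v : uv∈E} ḡ_{uv}(i, y_v) + Σ_{v : vu∈E} ḡ_{vu}(y_v, i) ≤ 0. Then every q ∈ S_f ∩ P^{2,y} with q ≤ p satisfies q_u(i) = i. -/
/-!
Suppose `q` moves `i`, so `q_u(i) = y_u` and no label is mapped to `i` by `q_u`. Labels outside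
`Y` lie in the range of `p`, hence of `q`, and are therefore fixed by `q`; so `h = f − [q]ᵀf`
vanishes at `δ(y)` and agrees with `g` wherever `i` at `u` meets labels outside `Y`. Perturb
`δ(y)` inside `Λ` to `μ = δ(y) + s ν`, where `ν` shifts unit mass at `u` from `y_u` to `i` and, on
every edge at `u`, onto the pair attaining `Δ_{uv}(i)` or `Δ_{vu}(i)`. Then
`⟨h, μ⟩ = s (ḡ_u(i) + Σ ḡ_{uv}(i, y_v) + Σ ḡ_{vu}(y_v, i)) ≤ 0`, so `μ` minimizes `⟨h, ·⟩` over
`Λ` and strict `Λ`-improvement forces `[q]μ = μ`, although `([q]μ)_u(i) = 0 < s = μ_u(i)`.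
-/

open Finset

noncomputable section

variable {V : Type*} [Fintype V] [DecidableEq V]
variable {X : V → Type*} [∀ v, Fintype (X v)] [∀ v, DecidableEq (X v)]
variable {E : Finset (V × V)}

set_option linter.unusedSectionVars false

open Filter Topology

theorem dotp_eq_dotProduct (f μ : GVec X E) : dotp f μ = f ⬝ᵥ μ := rfl

@[simp] theorem lift_uIdx (x : ∀ v, X v) (v : V) (k : X v) :
    lift x (uIdx v k : GIdx X E) = if x v = k then 1 else 0 := rfl

@[simp] theorem lift_pIdx (x : ∀ v, X v) (e : {e : V × V // e ∈ E}) (a : X e.1.1)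
    (b : X e.1.2) : lift x (pIdx e a b) = if x e.1.1 = a ∧ x e.1.2 = b then 1 else 0 := rfl

theorem dotProduct_lift (f : GVec X E) (x : ∀ v, X v) : f ⬝ᵥ lift x = energy f x := by
  simp [dotProduct, lift, energy, Fintype.sum_sum_type, Fintype.sum_sigma, Fintype.sum_prod_type,
    cIdx, uIdx, pIdx, ite_and, add_assoc]

theorem lift_mem_localPolytope (x : ∀ v, X v) : lift x ∈ localPolytope X E := by
  refine ⟨?_, rfl, fun v => ?_, fun e a => ?_, fun e b => ?_⟩
  · rintro (_ | ⟨v, k⟩ | ⟨e, a, b⟩) <;> simp only [lift] <;> positivity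
  · simp [lift, uIdx, cIdx]
  · simp [lift, uIdx, pIdx, ite_and]
  · simp [lift, uIdx, pIdx, ite_and, eq_comm]

variable (X E) in
def localPolytopeDirection : Submodule ℝ (GVec X E) where
  carrier := {ν | ν cIdx = 0 ∧ (∀ v, ∑ k : X v, ν (uIdx v k) = 0) ∧
    (∀ (e : {e : V × V // e ∈ E}) (a : X e.1.1),
      ∑ b, ν (pIdx e a b) = ν (uIdx e.1.1 a)) ∧
    ∀ (e : {e : V × V // e ∈ E}) (b : X e.1.2), ∑ a, ν (pIdx e a b) = ν (uIdx e.1.2 b)}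
  add_mem' := by
    rintro μ ν ⟨hμc, hμv, hμr, hμl⟩ ⟨hνc, hνv, hνr, hνl⟩
    refine ⟨by simp [hμc, hνc], fun v => ?_, fun e a => ?_, fun e b => ?_⟩ <;>
      simp [Finset.sum_add_distrib, *]
  zero_mem' := by simp
  smul_mem' := by
    rintro c ν ⟨hνc, hνv, hνr, hνl⟩
    refine ⟨by simp [hνc], fun v => ?_, fun e a => ?_, fun e b => ?_⟩ <;>
      simp [← Finset.mul_sum, *]

theorem sub_mem_localPolytopeDirection {μ μ' : GVec X E} (hμ : μ ∈ localPolytope X E)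
    (hμ' : μ' ∈ localPolytope X E) : μ - μ' ∈ localPolytopeDirection X E := by
  obtain ⟨-, hμc, hμv, hμr, hμl⟩ := hμ
  obtain ⟨-, hμc', hμv', hμr', hμl'⟩ := hμ'
  refine ⟨by simp [hμc, hμc'], fun v => ?_, fun e a => ?_, fun e b => ?_⟩ <;>
    simp [Finset.sum_sub_distrib, *]

theorem exists_pos_add_smul_mem_localPolytope {μ ν : GVec X E} (hμ : μ ∈ localPolytope X E)
    (hν : ν ∈ localPolytopeDirection X E) (hpos : ∀ idx, μ idx = 0 → 0 ≤ ν idx) :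
    ∃ s > (0 : ℝ), μ + s • ν ∈ localPolytope X E := by
  obtain ⟨hμ0, hμc, hμv, hμr, hμl⟩ := hμ
  obtain ⟨hνc, hνv, hνr, hνl⟩ := hν
  have hnonneg : ∀ᶠ s in 𝓝[>] (0 : ℝ), ∀ idx, 0 ≤ μ idx + s * ν idx := by
    refine eventually_all.2 fun idx => ?_
    rcases (hμ0 idx).eq_or_lt with h | h
    · filter_upwards [self_mem_nhdsWithin] with s hs
      rw [← h, zero_add]
      exact mul_nonneg hs.le (hpos idx h.symm)
    · have hcont : Continuous fun s : ℝ => μ idx + s * ν idx := by fun_prop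
      filter_upwards [nhdsWithin_le_nhds ((hcont.tendsto' 0 _ (by simp)).eventually
        (lt_mem_nhds h))] with s hs using hs.le
  obtain ⟨s, hs, hspos⟩ := (hnonneg.and self_mem_nhdsWithin).exists
  refine ⟨s, hspos, hs, by simp [hμc, hνc], fun v => ?_, fun e a => ?_, fun e b => ?_⟩ <;>
    simp [Finset.sum_add_distrib, ← Finset.mul_sum, *]

@[simp] theorem Padj_cIdx (p : ∀ v, X v → X v) (f : GVec X E) : Padj p f cIdx = f cIdx := rfl

@[simp] theorem Padj_uIdx (p : ∀ v, X v → X v) (f : GVec X E) (v : V) (k : X v) :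
    Padj p f (uIdx v k) = f (uIdx v (p v k)) := rfl

@[simp] theorem Padj_pIdx (p : ∀ v, X v → X v) (f : GVec X E) (e : {e : V × V // e ∈ E})
    (a : X e.1.1) (b : X e.1.2) :
    Padj p f (pIdx e a b) = f (pIdx e (p e.1.1 a) (p e.1.2 b)) := rfl

theorem energy_sub_Padj_eq_zero (f : GVec X E) {p : ∀ v, X v → X v} {x : ∀ v, X v}
    (hx : ∀ v, p v (x v) = x v) : energy (f - Padj p f) x = 0 := by
  simp [energy, hx]

theorem energy_sub_Padj_update (f : GVec X E) {p : ∀ v, X v → X v} {x : ∀ v, X v}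
    (hx : ∀ v, p v (x v) = x v) (u : V) (k : X u) :
    energy (f - Padj p f) (Function.update x u k) = (f - Padj p f) (uIdx u k) +
      ∑ e : {e : V × V // e ∈ E}, (f - Padj p f)
        (pIdx e (Function.update x u k e.1.1) (Function.update x u k e.1.2)) := by
  rw [energy, Fintype.sum_eq_single u fun v hv => by simp [Function.update_of_ne hv, hx]]
  simp

theorem dotProduct_sub_Padj_lift_update_sub_lift (f : GVec X E) {p : ∀ v, X v → X v}
    {x : ∀ v, X v} (hx : ∀ v, p v (x v) = x v) {w : V} {c : X w} (hc : p w c = c) :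
    (f - Padj p f) ⬝ᵥ (lift (Function.update x w c) - lift x) = 0 := by
  have hxc : ∀ v, p v (Function.update x w c v) = Function.update x w c v := fun v => by
    rcases eq_or_ne v w with rfl | h <;> simp [*]
  rw [dotProduct_sub, dotProduct_lift, dotProduct_lift, energy_sub_Padj_eq_zero f hx,
    energy_sub_Padj_eq_zero f hxc, sub_self]

theorem Pmap_uIdx_eq_zero (p : ∀ v, X v → X v) (μ : GVec X E) {v : V} {k : X v}
    (hk : k ∉ Set.range (p v)) : Pmap p μ (uIdx v k) = 0 :=
  Finset.sum_eq_zero fun k' _ => if_neg fun h => hk ⟨k', h⟩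

theorem InPtwo.apply_eq_self_of_mem_range {y : ∀ v, X v} {p : ∀ v, X v → X v}
    (hp : InPtwo y p) {v : V} {k : X v} (hk : k ∈ Set.range (p v)) : p v k = k := by
  obtain ⟨Y, hY, hpY⟩ := hp
  obtain ⟨m, rfl⟩ := hk
  rw [hpY v m]
  split_ifs with hm
  · rw [hpY, if_neg (hY v)]
  · rw [hpY, if_neg hm]

theorem InPtwo.apply_eq_of_apply_ne {y : ∀ v, X v} {p : ∀ v, X v → X v}
    (hp : InPtwo y p) {v : V} {k : X v} (hk : p v k ≠ k) : p v k = y v := by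
  obtain ⟨Y, -, hpY⟩ := hp
  rw [hpY] at hk ⊢
  split_ifs at hk ⊢ with h
  · rfl
  · exact absurd rfl hk

def edgeExchange (e : {e : V × V // e ∈ E}) (a₁ a₂ : X e.1.1) (b₁ b₂ : X e.1.2) :
    GVec X E :=
  Pi.single (pIdx e a₁ b₁) 1 - Pi.single (pIdx e a₁ b₂) 1 - Pi.single (pIdx e a₂ b₁) 1 +
    Pi.single (pIdx e a₂ b₂) 1

section EdgeExchange

variable (e : {e : V × V // e ∈ E}) (a₁ a₂ : X e.1.1) (b₁ b₂ : X e.1.2)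

theorem dotProduct_edgeExchange (f : GVec X E) : f ⬝ᵥ edgeExchange e a₁ a₂ b₁ b₂ =
    f (pIdx e a₁ b₁) - f (pIdx e a₁ b₂) - f (pIdx e a₂ b₁) + f (pIdx e a₂ b₂) := by
  simp [edgeExchange, dotProduct_add, dotProduct_sub, dotProduct_single]

@[simp] theorem edgeExchange_cIdx : edgeExchange e a₁ a₂ b₁ b₂ cIdx = 0 := by
  simp [edgeExchange, cIdx, pIdx]

@[simp] theorem edgeExchange_uIdx (v : V) (k : X v) :
    edgeExchange e a₁ a₂ b₁ b₂ (uIdx v k) = 0 := by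
  simp [edgeExchange, uIdx, pIdx]

theorem edgeExchange_pIdx_of_ne {e' : {e : V × V // e ∈ E}} (he : e' ≠ e) (a : X e'.1.1)
    (b : X e'.1.2) : edgeExchange e a₁ a₂ b₁ b₂ (pIdx e' a b) = 0 := by
  simp [edgeExchange, pIdx, he]

theorem edgeExchange_pIdx (a : X e.1.1) (b : X e.1.2) :
    edgeExchange e a₁ a₂ b₁ b₂ (pIdx e a b) =
      (if a = a₁ ∧ b = b₁ then 1 else 0) - (if a = a₁ ∧ b = b₂ then 1 else 0) -
        (if a = a₂ ∧ b = b₁ then 1 else 0) + (if a = a₂ ∧ b = b₂ then 1 else 0) := by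
  simp [edgeExchange, Pi.single_apply, pIdx]

theorem edgeExchange_mem_localPolytopeDirection :
    edgeExchange e a₁ a₂ b₁ b₂ ∈ localPolytopeDirection X E := by
  refine ⟨by simp, fun v => by simp, fun e' a => ?_, fun e' b => ?_⟩ <;>
    rcases eq_or_ne e' e with rfl | he
  · simp [edgeExchange_pIdx, ite_and, Finset.sum_add_distrib, Finset.sum_sub_distrib]
  · simp [edgeExchange_pIdx_of_ne _ _ _ _ _ he]
  · simp [edgeExchange_pIdx, ite_and, Finset.sum_add_distrib, Finset.sum_sub_distrib]
  · simp [edgeExchange_pIdx_of_ne _ _ _ _ _ he]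

end EdgeExchange

section Direction

variable (y : ∀ v, X v) {u : V} (i : X u)
  (js : ∀ e : {e : V × V // e ∈ E}, e.1.1 = u → X e.1.2)
  (ks : ∀ e : {e : V × V // e ∈ E}, e.1.2 = u → X e.1.1)

def headMove (e : {e : V × V // e ∈ E}) : GVec X E :=
  if h : e.1.1 = u then lift (Function.update y e.1.2 (js e h)) - lift y else 0

def tailMove (e : {e : V × V // e ∈ E}) : GVec X E :=
  if h : e.1.2 = u then lift (Function.update y e.1.1 (ks e h)) - lift y else 0

/-- Together with the move of `u` to `i` and `headMove`, `tailMove`, this leaves on an edge `uw`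
the pairwise mass `[i, js] − [y_u, y_w]`, on an edge `wu` the mass `[ks, i] − [y_w, y_u]`, and on a
loop `uu` the mass `[i, js] + [ks, i] + [js, ks] − 3 [y_u, y_u]`. -/
def edgeCorrection (e : {e : V × V // e ∈ E}) : GVec X E :=
  if h₁ : e.1.1 = u then
    if h₂ : e.1.2 = u then
      edgeExchange e (cast (congrArg X h₁.symm) i)
          (cast (congrArg X (h₂.trans h₁.symm)) (js e h₁)) (js e h₁)
          (cast (congrArg X h₂.symm) i) +
        edgeExchange e (ks e h₂) (cast (congrArg X (h₂.trans h₁.symm)) (js e h₁))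
          (cast (congrArg X h₂.symm) i) (cast (congrArg X (h₁.trans h₂.symm)) (ks e h₂))
    else edgeExchange e (cast (congrArg X h₁.symm) i) (y e.1.1) (js e h₁) (y e.1.2)
  else if h₂ : e.1.2 = u then
    edgeExchange e (ks e h₂) (y e.1.1) (cast (congrArg X h₂.symm) i) (y e.1.2)
  else 0

def pruningDirection : GVec X E :=
  (lift (Function.update y u i) - lift y) +
    ∑ e, (headMove y js e + tailMove y ks e + edgeCorrection y i js ks e)

theorem pruningDirection_mem_localPolytopeDirection :
    pruningDirection y i js ks ∈ localPolytopeDirection X E := by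
  have hmove : ∀ x : ∀ v, X v, lift x - lift y ∈ localPolytopeDirection X E := fun x =>
    sub_mem_localPolytopeDirection (lift_mem_localPolytope x) (lift_mem_localPolytope y)
  refine add_mem (hmove _) (Submodule.sum_mem _ fun e _ => add_mem (add_mem ?_ ?_) ?_)
  · unfold headMove; split_ifs
    exacts [hmove _, zero_mem _]
  · unfold tailMove; split_ifs
    exacts [hmove _, zero_mem _]
  · unfold edgeCorrection; split_ifs
    all_goals first
      | exact zero_mem _
      | exact edgeExchange_mem_localPolytopeDirection ..
      | exact add_mem (edgeExchange_mem_localPolytopeDirection ..)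
          (edgeExchange_mem_localPolytopeDirection ..)

@[simp] theorem edgeCorrection_uIdx (e : {e : V × V // e ∈ E}) (v : V) (k : X v) :
    edgeCorrection y i js ks e (uIdx v k) = 0 := by
  unfold edgeCorrection; split_ifs <;> simp

theorem edgeCorrection_pIdx_of_ne {e e' : {e : V × V // e ∈ E}} (he : e' ≠ e) (a : X e'.1.1)
    (b : X e'.1.2) : edgeCorrection y i js ks e (pIdx e' a b) = 0 := by
  unfold edgeCorrection; split_ifs <;> simp [edgeExchange_pIdx_of_ne _ _ _ _ _ he]

variable {idx : GIdx X E}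

theorem lift_sub_lift_nonneg (x : ∀ v, X v) (h0 : lift y idx = 0) :
    0 ≤ (lift x - lift y : GVec X E) idx := by
  simpa [h0] using (lift_mem_localPolytope (E := E) x).1 idx

theorem headMove_nonneg (e : {e : V × V // e ∈ E}) (h0 : lift y idx = 0) :
    0 ≤ headMove y js e idx := by
  unfold headMove; split_ifs
  exacts [lift_sub_lift_nonneg y _ h0, le_rfl]

theorem tailMove_nonneg (e : {e : V × V // e ∈ E}) (h0 : lift y idx = 0) :
    0 ≤ tailMove y ks e idx := by
  unfold tailMove; split_ifs
  exacts [lift_sub_lift_nonneg y _ h0, le_rfl]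

theorem edgeCorrection_add_moves_nonneg (e : {e : V × V // e ∈ E}) (a : X e.1.1) (b : X e.1.2)
    (h0 : lift y (pIdx e a b) = 0) :
    0 ≤ (lift (Function.update y u i) - lift y : GVec X E) (pIdx e a b) +
      headMove y js e (pIdx e a b) + tailMove y ks e (pIdx e a b) +
      edgeCorrection y i js ks e (pIdx e a b) := by
  obtain ⟨⟨c, d⟩, hcd⟩ := e
  have hy : ¬(a = y c ∧ b = y d) := fun ⟨ha, hb⟩ => by simp [ha, hb] at h0
  by_cases h₁ : c = u <;> by_cases h₂ : d = u
  · subst h₁ h₂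
    simp only [headMove, tailMove, edgeCorrection, dite_true]
    simp only [Pi.add_apply, Pi.sub_apply, cast_eq, edgeExchange_pIdx, lift_pIdx,
      Function.update_self, @eq_comm _ _ a, @eq_comm _ _ b, hy, if_false]
    split_ifs <;> norm_num
  · subst h₁
    simp only [headMove, tailMove, edgeCorrection, dite_true, dif_neg h₂]
    simp only [Pi.sub_apply, Pi.zero_apply, cast_eq, edgeExchange_pIdx, lift_pIdx,
      Function.update_self, Function.update_of_ne h₂, Function.update_of_ne (Ne.symm h₂),
      @eq_comm _ _ a, @eq_comm _ _ b, hy, if_false]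
    split_ifs <;> norm_num
  · subst h₂
    simp only [headMove, tailMove, edgeCorrection, dite_true, dif_neg h₁]
    simp only [Pi.sub_apply, Pi.zero_apply, cast_eq, edgeExchange_pIdx, lift_pIdx,
      Function.update_self, Function.update_of_ne h₁, Function.update_of_ne (Ne.symm h₁),
      @eq_comm _ _ a, @eq_comm _ _ b, hy, if_false]
    split_ifs <;> norm_num
  · simp only [headMove, tailMove, edgeCorrection, dif_neg h₁, dif_neg h₂]
    simp only [Pi.sub_apply, Pi.zero_apply, lift_pIdx,
      Function.update_of_ne h₁, Function.update_of_ne h₂, @eq_comm _ _ a, @eq_comm _ _ b, hy,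
      if_false]
    norm_num

theorem pruningDirection_nonneg (h0 : lift y idx = 0) : 0 ≤ pruningDirection y i js ks idx := by
  have hmoves : ∀ {idx : GIdx X E}, lift y idx = 0 → ∀ e,
      0 ≤ headMove y js e idx + tailMove y ks e idx := fun h0 e =>
    add_nonneg (headMove_nonneg y js e h0) (tailMove_nonneg y ks e h0)
  rcases idx with _ | ⟨v, k⟩ | ⟨e, a, b⟩
  · simp [lift] at h0
  · change lift y (uIdx v k) = 0 at h0
    change 0 ≤ pruningDirection y i js ks (uIdx v k)
    simp only [pruningDirection, Pi.add_apply, Finset.sum_apply, edgeCorrection_uIdx, add_zero]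
    exact add_nonneg (lift_sub_lift_nonneg y _ h0) (Finset.sum_nonneg fun e _ => hmoves h0 e)
  · change lift y (pIdx e a b) = 0 at h0
    change 0 ≤ pruningDirection y i js ks (pIdx e a b)
    have hrest : ∀ e' ∈ Finset.univ.erase e, 0 ≤ headMove y js e' (pIdx e a b) +
        tailMove y ks e' (pIdx e a b) + edgeCorrection y i js ks e' (pIdx e a b) :=
      fun e' he' => by
        simpa [edgeCorrection_pIdx_of_ne y i js ks (Finset.ne_of_mem_erase he').symm]
          using hmoves h0 e'
    rw [pruningDirection, Pi.add_apply, Finset.sum_apply, ← Finset.add_sum_erase _ _ (mem_univ e)]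
    have hedge := edgeCorrection_add_moves_nonneg y i js ks e a b h0
    simp only [Pi.add_apply] at hedge ⊢
    linarith [Finset.sum_nonneg hrest]

end Direction

section Cost

variable (g : GVec X E) (Y : ∀ v, Finset (X v))

/-- For `e = vw`, `headMin g Y e a` is the paper's `Δ_{vw}(a)` and `tailMin g Y e b` is
`Δ_{wv}(b)`. -/
def headMin (e : {e : V × V // e ∈ E}) (a : X e.1.1) : ℝ :=
  sInf ((fun j => g (pIdx e a j)) '' {j | j ∉ Y e.1.2})

def tailMin (e : {e : V × V // e ∈ E}) (b : X e.1.2) : ℝ :=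
  sInf ((fun k => g (pIdx e k b)) '' {k | k ∉ Y e.1.1})

theorem exists_headMin_eq (e : {e : V × V // e ∈ E}) (a : X e.1.1) {j₀ : X e.1.2}
    (hj₀ : j₀ ∉ Y e.1.2) : ∃ j ∉ Y e.1.2, headMin g Y e a = g (pIdx e a j) := by
  have hne : {j | j ∉ Y e.1.2}.Nonempty := ⟨j₀, hj₀⟩
  obtain ⟨j, hj, hgj⟩ := (hne.image fun j => g (pIdx e a j)).csInf_mem (Set.toFinite _)
  exact ⟨j, hj, hgj.symm⟩

theorem exists_tailMin_eq (e : {e : V × V // e ∈ E}) (b : X e.1.2) {k₀ : X e.1.1}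
    (hk₀ : k₀ ∉ Y e.1.1) : ∃ k ∉ Y e.1.1, tailMin g Y e b = g (pIdx e k b) := by
  have hne : {k | k ∉ Y e.1.1}.Nonempty := ⟨k₀, hk₀⟩
  obtain ⟨k, hk, hgk⟩ := (hne.image fun k => g (pIdx e k b)).csInf_mem (Set.toFinite _)
  exact ⟨k, hk, hgk.symm⟩

end Cost

theorem reduced_pIdx_of_mem_of_not_mem {f : GVec X E} {y : ∀ v, X v} {Y : ∀ v, Finset (X v)}
    {e : {e : V × V // e ∈ E}} {a : X e.1.1} {b : X e.1.2} (ha : a ∈ Y e.1.1)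
    (hb : b ∉ Y e.1.2) :
    reduced f y Y (pIdx e a b) = headMin (f - Padj (subToOne y Y) f) Y e a := by
  simp only [reduced, pIdx, if_pos ha, if_neg hb]
  rfl

theorem reduced_pIdx_of_not_mem_of_mem {f : GVec X E} {y : ∀ v, X v} {Y : ∀ v, Finset (X v)}
    {e : {e : V × V // e ∈ E}} {a : X e.1.1} {b : X e.1.2} (ha : a ∉ Y e.1.1)
    (hb : b ∈ Y e.1.2) :
    reduced f y Y (pIdx e a b) = tailMin (f - Padj (subToOne y Y) f) Y e b := by
  simp only [reduced, pIdx, if_neg ha, if_pos hb]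
  rfl

def reducedSwitchCost (f : GVec X E) (y : ∀ v, X v) (Y : ∀ v, Finset (X v)) {u : V} (i : X u) :
    ℝ :=
  reduced f y Y (uIdx u i) +
    (∑ e : {e : V × V // e ∈ E}, if h : e.1.1 = u then
      reduced f y Y (pIdx e (cast (congrArg X h.symm) i) (y e.1.2)) else 0) +
    (∑ e : {e : V × V // e ∈ E}, if h : e.1.2 = u then
      reduced f y Y (pIdx e (y e.1.1) (cast (congrArg X h.symm) i)) else 0)

section DirectionCost

variable {f : GVec X E} {q : ∀ v, X v → X v} {y : ∀ v, X v} {Y : ∀ v, Finset (X v)} {u : V}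
  {i : X u} {js : ∀ e : {e : V × V // e ∈ E}, e.1.1 = u → X e.1.2}
  {ks : ∀ e : {e : V × V // e ∈ E}, e.1.2 = u → X e.1.1}

theorem dotProduct_headMove (hY : ∀ v, y v ∉ Y v) (hfix : ∀ v k, k ∉ Y v → q v k = k)
    (hjs : ∀ e h, js e h ∉ Y e.1.2) (e : {e : V × V // e ∈ E}) :
    (f - Padj q f) ⬝ᵥ headMove y js e = 0 := by
  unfold headMove; split_ifs with h
  · exact dotProduct_sub_Padj_lift_update_sub_lift f (fun v => hfix v _ (hY v))
      (hfix _ _ (hjs e h))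
  · exact dotProduct_zero _

theorem dotProduct_tailMove (hY : ∀ v, y v ∉ Y v) (hfix : ∀ v k, k ∉ Y v → q v k = k)
    (hks : ∀ e h, ks e h ∉ Y e.1.1) (e : {e : V × V // e ∈ E}) :
    (f - Padj q f) ⬝ᵥ tailMove y ks e = 0 := by
  unfold tailMove; split_ifs with h
  · exact dotProduct_sub_Padj_lift_update_sub_lift f (fun v => hfix v _ (hY v))
      (hfix _ _ (hks e h))
  · exact dotProduct_zero _

theorem edgeCorrection_cost_eq_reduced (hY : ∀ v, y v ∉ Y v)
    (hfix : ∀ v k, k ∉ Y v → q v k = k) (hi : i ∈ Y u) (hqi : q u i = y u)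
    (hjs : ∀ e h, js e h ∉ Y e.1.2) (hks : ∀ e h, ks e h ∉ Y e.1.1)
    (hjmin : ∀ e h, headMin (f - Padj (subToOne y Y) f) Y e (cast (congrArg X h.symm) i) =
      (f - Padj (subToOne y Y) f) (pIdx e (cast (congrArg X h.symm) i) (js e h)))
    (hkmin : ∀ e h, tailMin (f - Padj (subToOne y Y) f) Y e (cast (congrArg X h.symm) i) =
      (f - Padj (subToOne y Y) f) (pIdx e (ks e h) (cast (congrArg X h.symm) i)))
    (e : {e : V × V // e ∈ E}) :
    (f - Padj q f) (pIdx e (Function.update y u i e.1.1) (Function.update y u i e.1.2)) +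
        (f - Padj q f) ⬝ᵥ edgeCorrection y i js ks e =
      (if h : e.1.1 = u then reduced f y Y (pIdx e (cast (congrArg X h.symm) i) (y e.1.2))
        else 0) +
      (if h : e.1.2 = u then reduced f y Y (pIdx e (y e.1.1) (cast (congrArg X h.symm) i))
        else 0) := by
  obtain ⟨⟨c, d⟩, hcd⟩ := e
  have hpi : subToOne y Y u i = y u := if_pos hi
  have hp : ∀ v k, k ∉ Y v → subToOne y Y v k = k := fun v k hk => if_neg hk
  by_cases h₁ : c = u <;> by_cases h₂ : d = u
  · subst h₁ h₂
    have hJ := hjs ⟨(d, d), hcd⟩ rfl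
    have hK := hks ⟨(d, d), hcd⟩ rfl
    have hJmin := hjmin ⟨(d, d), hcd⟩ rfl
    have hKmin := hkmin ⟨(d, d), hcd⟩ rfl
    simp only [cast_eq] at hJmin hKmin
    simp only [edgeCorrection, dite_true, cast_eq, dotProduct_add, dotProduct_edgeExchange,
      Function.update_self, reduced_pIdx_of_mem_of_not_mem (e := ⟨(d, d), hcd⟩) hi (hY d),
      reduced_pIdx_of_not_mem_of_mem (e := ⟨(d, d), hcd⟩) (hY d) hi, hJmin, hKmin,
      Pi.sub_apply, Padj_pIdx, hqi, hpi, hfix _ _ hJ, hfix _ _ hK, hp _ _ hJ, hp _ _ hK]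
    ring
  · subst h₁
    have hJ := hjs ⟨(c, d), hcd⟩ rfl
    have hJmin := hjmin ⟨(c, d), hcd⟩ rfl
    simp only [cast_eq] at hJmin
    simp only [edgeCorrection, dite_true, dif_neg h₂, cast_eq, dotProduct_edgeExchange,
      Function.update_self, Function.update_of_ne h₂,
      reduced_pIdx_of_mem_of_not_mem (e := ⟨(c, d), hcd⟩) hi (hY d), hJmin, Pi.sub_apply,
      Padj_pIdx, hqi, hpi, hfix _ _ hJ, hfix _ _ (hY c), hfix _ _ (hY d), hp _ _ hJ]
    ring
  · subst h₂
    have hK := hks ⟨(c, d), hcd⟩ rfl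
    have hKmin := hkmin ⟨(c, d), hcd⟩ rfl
    simp only [cast_eq] at hKmin
    simp only [edgeCorrection, dite_true, dif_neg h₁, cast_eq, dotProduct_edgeExchange,
      Function.update_self, Function.update_of_ne h₁,
      reduced_pIdx_of_not_mem_of_mem (e := ⟨(c, d), hcd⟩) (hY c) hi, hKmin, Pi.sub_apply,
      Padj_pIdx, hqi, hpi, hfix _ _ hK, hfix _ _ (hY c), hfix _ _ (hY d), hp _ _ hK]
    ring
  · simp only [edgeCorrection, dif_neg h₁, dif_neg h₂, dotProduct_zero,
      Function.update_of_ne h₁, Function.update_of_ne h₂, Pi.sub_apply, Padj_pIdx,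
      hfix _ _ (hY c), hfix _ _ (hY d)]
    ring

theorem pruningDirection_uIdx_self (hY : ∀ v, y v ∉ Y v) (hi : i ∈ Y u)
    (hjs : ∀ e h, js e h ∉ Y e.1.2) (hks : ∀ e h, ks e h ∉ Y e.1.1) :
    pruningDirection y i js ks (uIdx u i) = 1 := by
  have hyi : y u ≠ i := fun h => hY u (h ▸ hi)
  have hmove : ∀ w (c : X w), c ∉ Y w →
      (lift (Function.update y w c) - lift y : GVec X E) (uIdx u i) = 0 := fun w c hc => by
    rcases eq_or_ne u w with rfl | h
    · simp [hyi, show c ≠ i from fun h => hc (h ▸ hi)]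
    · simp [Function.update_of_ne h, hyi]
  have hheads : ∀ e, headMove y js e (uIdx u i) = 0 := fun e => by
    unfold headMove; split_ifs with h
    exacts [hmove _ _ (hjs e h), rfl]
  have htails : ∀ e, tailMove y ks e (uIdx u i) = 0 := fun e => by
    unfold tailMove; split_ifs with h
    exacts [hmove _ _ (hks e h), rfl]
  simp [pruningDirection, Finset.sum_apply, hheads, htails, hyi]

theorem dotProduct_pruningDirection (hY : ∀ v, y v ∉ Y v)
    (hfix : ∀ v k, k ∉ Y v → q v k = k) (hi : i ∈ Y u) (hqi : q u i = y u)
    (hjs : ∀ e h, js e h ∉ Y e.1.2) (hks : ∀ e h, ks e h ∉ Y e.1.1)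
    (hjmin : ∀ e h, headMin (f - Padj (subToOne y Y) f) Y e (cast (congrArg X h.symm) i) =
      (f - Padj (subToOne y Y) f) (pIdx e (cast (congrArg X h.symm) i) (js e h)))
    (hkmin : ∀ e h, tailMin (f - Padj (subToOne y Y) f) Y e (cast (congrArg X h.symm) i) =
      (f - Padj (subToOne y Y) f) (pIdx e (ks e h) (cast (congrArg X h.symm) i))) :
    (f - Padj q f) ⬝ᵥ pruningDirection y i js ks = reducedSwitchCost f y Y i := by
  have hyfix : ∀ v, q v (y v) = y v := fun v => hfix v _ (hY v)
  have hnode : (f - Padj q f) (uIdx u i) = reduced f y Y (uIdx u i) := by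
    change _ = f _ - f (uIdx u (if i ∈ Y u then y u else i))
    rw [if_pos hi, Pi.sub_apply, Padj_uIdx, hqi]
  simp only [pruningDirection, dotProduct_add, dotProduct_sub, dotProduct_sum, dotProduct_lift,
    energy_sub_Padj_eq_zero f hyfix, energy_sub_Padj_update f hyfix,
    dotProduct_headMove hY hfix hjs, dotProduct_tailMove hY hfix hks, zero_add, sub_zero]
  rw [reducedSwitchCost, add_assoc, ← Finset.sum_add_distrib,
    Finset.sum_congr rfl fun e _ =>
      edgeCorrection_cost_eq_reduced hY hfix hi hqi hjs hks hjmin hkmin e,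
    Finset.sum_add_distrib, hnode, add_assoc]

theorem exists_pruningDirection (hY : ∀ v, y v ∉ Y v) (hfix : ∀ v k, k ∉ Y v → q v k = k)
    (hi : i ∈ Y u) (hqi : q u i = y u) :
    ∃ ν ∈ localPolytopeDirection X E, (∀ idx, lift y idx = 0 → 0 ≤ ν idx) ∧
      ν (uIdx u i) = 1 ∧ (f - Padj q f) ⬝ᵥ ν = reducedSwitchCost f y Y i := by
  choose js hjs hjmin using fun e (h : e.1.1 = u) =>
    exists_headMin_eq (f - Padj (subToOne y Y) f) Y e (cast (congrArg X h.symm) i) (hY e.1.2)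
  choose ks hks hkmin using fun e (h : e.1.2 = u) =>
    exists_tailMin_eq (f - Padj (subToOne y Y) f) Y e (cast (congrArg X h.symm) i) (hY e.1.1)
  exact ⟨pruningDirection y i js ks, pruningDirection_mem_localPolytopeDirection y i js ks,
    fun _ => pruningDirection_nonneg y i js ks, pruningDirection_uIdx_self hY hi hjs hks,
    dotProduct_pruningDirection hY hfix hi hqi hjs hks hjmin hkmin⟩

end DirectionCost

theorem single_node_pruning_sound_general
    (f : GVec X E) (y : ∀ v, X v) (Y : ∀ v, Finset (X v)) (hY : ∀ v, y v ∉ Y v)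
    (u : V) (i : X u) (hi : i ∈ Y u)
    (hneg : reduced f y Y (uIdx u i) +
        (∑ e : {e : V × V // e ∈ E},
          (if h : e.1.1 = u then
            reduced f y Y (pIdx e (cast (congrArg X h.symm) i) (y e.1.2)) else 0)) +
        (∑ e : {e : V × V // e ∈ E},
          (if h : e.1.2 = u then
            reduced f y Y (pIdx e (y e.1.1) (cast (congrArg X h.symm) i)) else 0)) ≤ 0) :
    ∀ q : ∀ v, X v → X v, InPtwo y q →
      StrictlyLambdaImproving (localPolytope X E) f q →
      (∀ v : V, Set.range (subToOne y Y v) ⊆ Set.range (q v)) →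
      q u i = i := by
  intro q hq hS hle
  by_contra hne
  have hfix : ∀ v k, k ∉ Y v → q v k = k := fun v k hk =>
    hq.apply_eq_self_of_mem_range (hle v ⟨k, if_neg hk⟩)
  obtain ⟨ν, hν, hνpos, hνui, hνcost⟩ :=
    exists_pruningDirection (f := f) hY hfix hi (hq.apply_eq_of_apply_ne hne)
  obtain ⟨s, hs, hμ⟩ :=
    exists_pos_add_smul_mem_localPolytope (lift_mem_localPolytope y) hν hνpos
  have hcost : dotp (f - Padj q f) (lift y + s • ν) = 0 := by
    refine le_antisymm ?_ (hS.1.2 ⟨_, hμ, rfl⟩)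
    rw [dotp_eq_dotProduct, dotProduct_add, dotProduct_smul, dotProduct_lift,
      energy_sub_Padj_eq_zero f fun v => hfix v _ (hY v), hνcost, zero_add, smul_eq_mul]
    exact mul_nonpos_of_nonneg_of_nonpos hs.le hneg
  have hμui := congrFun (hS.2 _ hμ hcost) (uIdx u i)
  rw [Pmap_uIdx_eq_zero q _ fun hmem => hne (hq.apply_eq_self_of_mem_range hmem)] at hμui
  have hyi : y u ≠ i := fun h => hY u (h ▸ hi)
  simp [hνui, hyi] at hμui
  exact hs.ne hμui

theorem single_node_pruning_sound
    [∀ v, Nonempty (X v)]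
    (f : GVec X E) (y : ∀ v, X v) (Y : ∀ v, Finset (X v)) (hY : ∀ v, y v ∉ Y v)
    (u : V) (i : X u) (hi : i ∈ Y u)
    (hneg : reduced f y Y (uIdx u i) +
        (∑ e : {e : V × V // e ∈ E},
          (if h : e.1.1 = u then
            reduced f y Y (pIdx e (cast (congrArg X h.symm) i) (y e.1.2)) else 0)) +
        (∑ e : {e : V × V // e ∈ E},
          (if h : e.1.2 = u then
            reduced f y Y (pIdx e (y e.1.1) (cast (congrArg X h.symm) i)) else 0)) ≤ 0) :
    ∀ q : ∀ v, X v → X v, InPtwo y q →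
      StrictlyLambdaImproving (localPolytope X E) f q →
      (∀ v : V, Set.range (subToOne y Y v) ⊆ Set.range (q v)) →
      q u i = i :=
  single_node_pruning_sound_general f y Y hY u i hi hneg
end
end
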